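/- arXiv:2012.13839 — 4 statements merged into one kernel-verified Lean document; each statement's English description precedes it below -/
import Mathlib

section
/- Let P ⊆ S^{N−1} be a finite root system in ℝ^N (N ≥ 1) satisfying condition (EA), let ρ ≥ 0 and 0 < r, R. Then there exists a constant C > 0, depending only on N, P, ρ, r and R, such that for every open set Ω ⊆ ℝ^N satisfying the reflection property (RP) with respect to P and ρ, containing the open ball 𝔅_r of radius σ1(P)⁻¹σ2(P)(ρ + 2r) about the origin, and contained in B(0, R), the (N−1)-dimensional Hausdorff measure of the topological boundary of Ω satisfies H^{N−1}(∂Ω) ≤ C. -/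
open scoped RealInnerProductSpace
open Metric Set MeasureTheory

noncomputable section

abbrev E (N : ℕ) := EuclideanSpace ℝ (Fin N)

variable {N : ℕ}

/-- Reflection across the hyperplane `Π_p(s) = {x | x·p = s}`. -/
def reflect (p : E N) (s : ℝ) (x : E N) : E N := x - (2 * (⟪x, p⟫ - s)) • p

/-- Reflection across the hyperplane through the origin orthogonal to `p`. -/
def reflect0 (p : E N) : E N → E N := reflect p 0

/-- A finite root system of unit vectors. -/
def IsRootSystem (P : Set (E N)) : Prop :=
  P.Finite ∧ (∀ p ∈ P, ‖p‖ = 1) ∧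
  (∀ p ∈ P, {q | q ∈ P ∧ ∃ c : ℝ, q = c • p} = {p, -p}) ∧
  (∀ p ∈ P, reflect0 p '' P = P)

/-- Condition (EA): for every hyperplane through the origin (with normal `v ≠ 0`),
the part of `P` outside the hyperplane spans `ℝ^N`. -/
def CondEA (P : Set (E N)) : Prop :=
  ∀ v : E N, v ≠ 0 → Submodule.span ℝ {p | p ∈ P ∧ ⟪p, v⟫ ≠ 0} = ⊤

/-- The reflection property (RP) with respect to `P` and `ρ`. -/
def ReflProp (P : Set (E N)) (ρ : ℝ) (Ω : Set (E N)) : Prop :=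
  ∀ p ∈ P, ∀ s > ρ,
    reflect p s '' Ω ∩ {x | ⟪x, p⟫ < s} ⊆ Ω ∩ {x | ⟪x, p⟫ < s}

/-- `v` enumerates a basis of `ℝ^N` consisting of elements of `P`. -/
def BasisIn (P : Set (E N)) (v : Fin N → E N) : Prop :=
  (∀ i, v i ∈ P) ∧ LinearIndependent ℝ v ∧ Submodule.span ℝ (Set.range v) = ⊤

/-- The open cone `Co_r(A)` generated by a basis. -/
def Cone (r : ℝ) (v : Fin N → E N) : Set (E N) :=
  {x | ∃ a : Fin N → ℝ, (∀ i, 0 < a i) ∧ (∑ i, a i) < r ∧ x = ∑ i, a i • v i}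

/-- `σ₁(P)`. -/
def sigma1 (P : Set (E N)) : ℝ :=
  sInf {s | ∃ p₁ ∈ P, s = sSup {t | ∃ v : Fin N → E N, BasisIn P v ∧
    t = sInf (Set.range fun i => |⟪v i, p₁⟫|)}}

/-- `σ₂(P)`. -/
def sigma2 (P : Set (E N)) : ℝ :=
  sSup {t | ∃ x : E N, (∀ p ∈ P, |⟪p, x⟫| ≤ 1) ∧ t = ‖x‖}

/-- `σ₃(P)`. -/
def sigma3 (P : Set (E N)) : ℝ :=
  sInf {s | ∃ v : Fin N → E N, BasisIn P v ∧
    s = sSup {r | 0 < r ∧ ball ((1 / (2 * (N : ℝ))) • ∑ i, v i) r ⊆ Cone 1 v}}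


/-!
Away from the ball `𝔅_r`, every point `x` admits a basis `b` of `ℝ^N` made of roots with
`x·b_i ≥ ρ + 2r`: take a root `p` maximising `p·x`, so that `σ₂ (p·x) ≥ |x|`, and a basis of
roots `w_i` with `|w_i·p| ≥ σ₁`; for `u = ±w_i` with `u·p ≥ σ₁`, either `u` or the root
`2 (u·p) p - u` has inner product at least `σ₁ (p·x)` with `x`, so such roots span `ℝ^N`. By (RP), reflecting across hyperplanes `Π_{b_i}(s)`,
`s > ρ`, a point outside `Ω` stays outside after moving by `∑ a_i b_i` with `a_i > 0` and
`∑ a_i < 2r`. Hence two boundary points `x, y` sharing the basis `b` never satisfy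
`y - x ∈ Co_{2r}(b)`. Nearby such points differ by vectors whose `b`-coordinates take both
signs, and these are uniformly transversal to `∑ b_i`; so the orthogonal projection onto the
hyperplane `(∑ b_i)^⊥` is bi-Lipschitz on small pieces, which bounds `H^{N-1}` of each piece.
There are finitely many bases of roots, and finitely many pieces cover `B(0, R)`.
-/

open scoped ENNReal NNReal

theorem Module.Basis.exists_basis_forall_mem {K V ι : Type*} [DivisionRing K] [AddCommGroup V]
    [Module K V] (b₀ : Module.Basis ι K V) {s : Set V} (hs : Submodule.span K s = ⊤) :
    ∃ b : Module.Basis ι K V, ∀ i, b i ∈ s := by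
  let b := Module.Basis.ofSpan hs.ge
  exact ⟨b.reindex (b.indexEquiv b₀), fun i => Module.Basis.ofSpan_subset hs.ge
    ⟨(b.indexEquiv b₀).symm i, by simp [b]⟩⟩

theorem Module.Basis.continuous_repr_apply {V ι : Type*} [NormedAddCommGroup V]
    [NormedSpace ℝ V] [FiniteDimensional ℝ V] (b : Module.Basis ι ℝ V) (i : ι) :
    Continuous fun x => b.repr x i :=
  (b.coord i).continuous_of_finiteDimensional

theorem eq_zero_of_forall_inner_eq_zero {F : Type*} [NormedAddCommGroup F]
    [InnerProductSpace ℝ F] {s : Set F} (hs : Submodule.span ℝ s = ⊤) {x : F}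
    (h : ∀ p ∈ s, ⟪p, x⟫ = 0) : x = 0 := by
  have hx : x ∈ (ℝ ∙ x)ᗮ := by
    refine Submodule.span_le.2 (fun p hp => ?_) (hs.ge Submodule.mem_top)
    exact Submodule.mem_orthogonal_singleton_iff_inner_left.2 (h p hp)
  exact inner_self_eq_zero.1 (Submodule.mem_orthogonal_singleton_iff_inner_right.1 hx)

theorem exists_pos_mul_norm_le_of_smul_mem {F G : Type*} [NormedAddCommGroup F]
    [NormedSpace ℝ F] [ProperSpace F] [NormedAddCommGroup G] [NormedSpace ℝ G] {K : Set F}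
    (hK : IsClosed K) (hsmul : ∀ c : ℝ, 0 < c → ∀ w ∈ K, c • w ∈ K) (f : F →L[ℝ] G)
    (hf : ∀ w ∈ K, f w = 0 → w = 0) : ∃ δ > 0, ∀ w ∈ K, δ * ‖w‖ ≤ ‖f w‖ := by
  have hnormalize : ∀ w ∈ K, w ≠ 0 → ‖w‖⁻¹ • w ∈ sphere (0 : F) 1 ∩ K := fun w hw hw0 =>
    ⟨by simp [norm_smul, hw0], hsmul _ (inv_pos.2 (norm_pos_iff.2 hw0)) w hw⟩
  by_cases hS : (sphere (0 : F) 1 ∩ K).Nonempty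
  · obtain ⟨u, ⟨hu1, huK⟩, hmin⟩ := ((isCompact_sphere 0 1).inter_right hK).exists_isMinOn hS
      (continuous_norm.comp f.continuous).continuousOn
    have hu0 : u ≠ 0 := ne_zero_of_mem_unit_sphere ⟨u, hu1⟩
    refine ⟨‖f u‖, norm_pos_iff.2 fun h => hu0 (hf u huK h), fun w hw => ?_⟩
    rcases eq_or_ne w 0 with rfl | hw0
    · simp
    have hle : ‖f u‖ ≤ ‖f (‖w‖⁻¹ • w)‖ := hmin (hnormalize w hw hw0)
    rw [map_smul, norm_smul, norm_inv, norm_norm, le_inv_mul_iff₀ (norm_pos_iff.2 hw0)] at hle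
    linarith
  · refine ⟨1, one_pos, fun w hw => ?_⟩
    obtain rfl : w = 0 := by_contra fun hw0 => hS ⟨_, hnormalize w hw hw0⟩
    simp

theorem le_hausdorffMeasure_image_of_antilipschitzWith_domRestrict {X Y : Type*}
    [EMetricSpace X] [MeasurableSpace X] [BorelSpace X] [EMetricSpace Y] [MeasurableSpace Y]
    [BorelSpace Y] {f : X → Y} {s : Set X} {K : ℝ≥0} (hf : AntilipschitzWith K (s.domRestrict f))
    {d : ℝ} (hd : 0 ≤ d) : μH[d] s ≤ (K : ℝ≥0∞) ^ d * μH[d] (f '' s) := by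
  calc μH[d] s = μH[d] (Set.univ : Set s) := by
        rw [← (isometry_subtype_coe (s := s)).hausdorffMeasure_image (Or.inl hd), Set.image_univ,
          Subtype.range_coe]
    _ ≤ (K : ℝ≥0∞) ^ d * μH[d] (s.domRestrict f '' Set.univ) :=
        hf.le_hausdorffMeasure_image hd _
    _ = (K : ℝ≥0∞) ^ d * μH[d] (f '' s) := by rw [Set.image_univ, Set.range_domRestrict]

theorem nontrivial_E (hN : 1 ≤ N) : Nontrivial (E N) :=
  Module.nontrivial_of_finrank_pos (by rw [finrank_euclideanSpace_fin]; omega)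

theorem exists_finBasis_forall_mem {S : Set (E N)} (hS : Submodule.span ℝ S = ⊤) :
    ∃ b : Module.Basis (Fin N) ℝ (E N), ∀ i, b i ∈ S :=
  (EuclideanSpace.basisFun (Fin N) ℝ).toBasis.exists_basis_forall_mem hS

theorem basisIn_coe {P : Set (E N)} (b : Module.Basis (Fin N) ℝ (E N)) (hb : ∀ i, b i ∈ P) :
    BasisIn P b :=
  ⟨hb, b.linearIndependent, b.span_eq⟩

theorem BasisIn.exists_basis {P : Set (E N)} {v : Fin N → E N} (hv : BasisIn P v) :
    ∃ b : Module.Basis (Fin N) ℝ (E N), ⇑b = v :=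
  ⟨Module.Basis.mk hv.2.1 hv.2.2.ge, Module.Basis.coe_mk _ _⟩

theorem finite_setOf_basisIn {P : Set (E N)} (hP : P.Finite) : {v | BasisIn P v}.Finite :=
  (Set.Finite.pi' fun _ => hP).subset fun _ hv => hv.1

namespace IsRootSystem

variable {P : Set (E N)}

theorem norm_eq_one (hP : IsRootSystem P) {p : E N} (hp : p ∈ P) : ‖p‖ = 1 := hP.2.1 p hp

theorem neg_mem (hP : IsRootSystem P) {p : E N} (hp : p ∈ P) : -p ∈ P := by
  have : -p ∈ {q | q ∈ P ∧ ∃ c : ℝ, q = c • p} := by rw [hP.2.2.1 p hp]; simp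
  exact this.1

theorem reflect0_mem (hP : IsRootSystem P) {p q : E N} (hp : p ∈ P) (hq : q ∈ P) :
    reflect0 p q ∈ P :=
  hP.2.2.2 p hp ▸ Set.mem_image_of_mem _ hq

theorem abs_inner_le_one (hP : IsRootSystem P) {p q : E N} (hp : p ∈ P) (hq : q ∈ P) :
    |⟪p, q⟫| ≤ 1 := by
  simpa [hP.norm_eq_one hp, hP.norm_eq_one hq] using abs_real_inner_le_norm p q

end IsRootSystem

namespace CondEA

variable {P : Set (E N)}

theorem span_eq_top (hN : 1 ≤ N) (hEA : CondEA P) : Submodule.span ℝ P = ⊤ := by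
  have := nontrivial_E hN
  obtain ⟨v, hv⟩ := exists_ne (0 : E N)
  exact eq_top_mono (Submodule.span_mono fun p hp => hp.1) (hEA v hv)

theorem nonempty (hN : 1 ≤ N) (hEA : CondEA P) : P.Nonempty := by
  have := nontrivial_E hN
  refine Set.nonempty_iff_ne_empty.2 fun hP => bot_ne_top (α := Submodule ℝ (E N)) ?_
  rw [← hEA.span_eq_top hN, hP, Submodule.span_empty]

end CondEA

section Sigma1

variable {P : Set (E N)}

/-- `sigma1 P` unfolds to the infimum of `basisMargin P p` over `p ∈ P`. -/
def basisMargin (P : Set (E N)) (p : E N) : ℝ :=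
  sSup {t | ∃ v : Fin N → E N, BasisIn P v ∧ t = sInf (Set.range fun i => |⟪v i, p⟫|)}

theorem finite_setOf_sInf_abs_inner (hP : P.Finite) (p : E N) :
    {t | ∃ v : Fin N → E N, BasisIn P v ∧ t = sInf (Set.range fun i => |⟪v i, p⟫|)}.Finite :=
  ((finite_setOf_basisIn hP).image fun v => sInf (Set.range fun i => |⟪v i, p⟫|)).subset <| by
    rintro _ ⟨v, hv, rfl⟩
    exact ⟨v, hv, rfl⟩

theorem finite_setOf_basisMargin (hP : P.Finite) : {s | ∃ p ∈ P, s = basisMargin P p}.Finite :=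
  (hP.image (basisMargin P)).subset <| by
    rintro _ ⟨p, hp, rfl⟩
    exact ⟨p, hp, rfl⟩

theorem exists_basis_basisMargin_eq (hP : P.Finite) (hspan : Submodule.span ℝ P = ⊤)
    (p : E N) : ∃ b : Module.Basis (Fin N) ℝ (E N), (∀ i, b i ∈ P) ∧
      basisMargin P p = sInf (Set.range fun i => |⟪b i, p⟫|) := by
  obtain ⟨b₀, hb₀⟩ := exists_finBasis_forall_mem hspan
  obtain ⟨v, hv, heq⟩ := Set.Nonempty.csSup_mem (by exact ⟨_, b₀, basisIn_coe b₀ hb₀, rfl⟩)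
    (finite_setOf_sInf_abs_inner hP p)
  obtain ⟨b, rfl⟩ := hv.exists_basis
  exact ⟨b, hv.1, heq⟩

theorem sInf_le_basisMargin (hP : P.Finite) {v : Fin N → E N} (hv : BasisIn P v) (p : E N) :
    sInf (Set.range fun i => |⟪v i, p⟫|) ≤ basisMargin P p :=
  le_csSup (finite_setOf_sInf_abs_inner hP p).bddAbove ⟨v, hv, rfl⟩

theorem exists_basis_sigma1_le_abs_inner (hP : P.Finite) (hspan : Submodule.span ℝ P = ⊤)
    {p : E N} (hp : p ∈ P) :
    ∃ b : Module.Basis (Fin N) ℝ (E N), (∀ i, b i ∈ P) ∧ ∀ i, sigma1 P ≤ |⟪b i, p⟫| := by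
  obtain ⟨b, hbP, hb⟩ := exists_basis_basisMargin_eq hP hspan p
  refine ⟨b, hbP, fun i => ?_⟩
  calc sigma1 P ≤ basisMargin P p := csInf_le (finite_setOf_basisMargin hP).bddBelow ⟨p, hp, rfl⟩
    _ = sInf (Set.range fun i => |⟪b i, p⟫|) := hb
    _ ≤ |⟪b i, p⟫| := csInf_le (Set.finite_range _).bddBelow ⟨i, rfl⟩

theorem sigma1_pos (hN : 1 ≤ N) (hP : IsRootSystem P) (hEA : CondEA P) : 0 < sigma1 P := by
  have : Nonempty (Fin N) := ⟨⟨0, hN⟩⟩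
  obtain ⟨p₀, hp₀⟩ := hEA.nonempty hN
  obtain ⟨p, hp, hσ⟩ : ∃ p ∈ P, sigma1 P = basisMargin P p :=
    Set.Nonempty.csInf_mem (by exact ⟨_, p₀, hp₀, rfl⟩) (finite_setOf_basisMargin hP.1)
  have hp0 : p ≠ 0 := ne_zero_of_norm_ne_zero (hP.norm_eq_one hp ▸ one_ne_zero)
  obtain ⟨b, hb⟩ := exists_finBasis_forall_mem (hEA p hp0)
  obtain ⟨i, hi⟩ := (Set.range_nonempty fun i => |⟪b i, p⟫|).csInf_mem (Set.finite_range _)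
  calc 0 < |⟪b i, p⟫| := abs_pos.2 (hb i).2
    _ = _ := hi
    _ ≤ sigma1 P := hσ ▸ sInf_le_basisMargin hP.1 (basisIn_coe b fun i => (hb i).1) p

end Sigma1

section Sigma2

variable {P : Set (E N)}

theorem bddAbove_setOf_norm_of_abs_inner_le_one (hP : P.Finite)
    (hspan : Submodule.span ℝ P = ⊤) :
    BddAbove {t | ∃ x : E N, (∀ p ∈ P, |⟪p, x⟫| ≤ 1) ∧ t = ‖x‖} := by
  have := hP.fintype
  let L : E N →ₗ[ℝ] (P → ℝ) := LinearMap.pi fun p => (innerSL ℝ (p : E N)).toLinearMap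
  have hker : LinearMap.ker L = ⊥ := Submodule.eq_bot_iff _ |>.2 fun x hx =>
    eq_zero_of_forall_inner_eq_zero hspan fun p hp => congrFun hx ⟨p, hp⟩
  obtain ⟨K, -, hK⟩ := L.exists_antilipschitzWith hker
  refine ⟨K, ?_⟩
  rintro _ ⟨x, hx, rfl⟩
  have hLx : ‖L x‖ ≤ 1 := (pi_norm_le_iff_of_nonneg zero_le_one).2 fun p => hx p p.2
  simpa using (hK.le_mul_dist x 0).trans (mul_le_of_le_one_right K.2 (by simpa using hLx))

theorem exists_mem_norm_le_sigma2_mul_inner (hP : IsRootSystem P)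
    (hspan : Submodule.span ℝ P = ⊤) {x : E N} (hx : x ≠ 0) :
    ∃ p ∈ P, 0 < ⟪p, x⟫ ∧ ‖x‖ ≤ sigma2 P * ⟪p, x⟫ := by
  obtain ⟨q, hq, hqx⟩ : ∃ q ∈ P, ⟪q, x⟫ ≠ 0 := by
    by_contra! h
    exact hx (eq_zero_of_forall_inner_eq_zero hspan h)
  obtain ⟨p, hp, hmax⟩ := Set.exists_max_image P (⟪·, x⟫) hP.1 ⟨q, hq⟩
  have habs : ∀ q ∈ P, |⟪q, x⟫| ≤ ⟪p, x⟫ := by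
    intro q hq
    have hneg := hmax (-q) (hP.neg_mem hq)
    rw [inner_neg_left] at hneg
    exact abs_le.2 ⟨by linarith, hmax q hq⟩
  have hpos : 0 < ⟪p, x⟫ := (abs_pos.2 hqx).trans_le (habs q hq)
  refine ⟨p, hp, hpos, ?_⟩
  have hmem : ‖⟪p, x⟫⁻¹ • x‖ ≤ sigma2 P := by
    refine le_csSup (bddAbove_setOf_norm_of_abs_inner_le_one hP.1 hspan) ⟨_, fun q hq => ?_, rfl⟩
    rw [real_inner_smul_right, abs_mul, abs_inv, abs_of_pos hpos, inv_mul_le_one₀ hpos]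
    exact habs q hq
  rw [norm_smul, Real.norm_eq_abs, abs_inv, abs_of_pos hpos, inv_mul_le_iff₀ hpos] at hmem
  linarith

theorem sigma2_pos (hN : 1 ≤ N) (hP : IsRootSystem P) (hEA : CondEA P) : 0 < sigma2 P := by
  have := nontrivial_E hN
  obtain ⟨x, hx⟩ := exists_ne (0 : E N)
  obtain ⟨p, -, hpx, hle⟩ := exists_mem_norm_le_sigma2_mul_inner hP (hEA.span_eq_top hN) hx
  exact pos_of_mul_pos_left ((norm_pos_iff.2 hx).trans_le hle) hpx.le

end Sigma2

section Margin

variable {P : Set (E N)}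

/-- Either `u` or the root `-Ψ_p(u) = 2⟪u, p⟫ p - u` qualifies, and so does `p`. -/
theorem mem_span_setOf_mul_le_inner (hP : IsRootSystem P) {p u x : E N} {c : ℝ}
    (hp : p ∈ P) (hu : u ∈ P) (hpx : 0 < ⟪p, x⟫) (hc : c ≤ 1) (hcu : c ≤ ⟪u, p⟫) :
    u ∈ Submodule.span ℝ {q | q ∈ P ∧ c * ⟪p, x⟫ ≤ ⟪q, x⟫} := by
  have hpQ : p ∈ Submodule.span ℝ {q | q ∈ P ∧ c * ⟪p, x⟫ ≤ ⟪q, x⟫} :=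
    Submodule.subset_span ⟨hp, mul_le_of_le_one_left hpx.le hc⟩
  by_cases hux : c * ⟪p, x⟫ ≤ ⟪u, x⟫
  · exact Submodule.subset_span ⟨hu, hux⟩
  have hrefl : (2 * ⟪u, p⟫) • p - u = -reflect0 p u := by simp [reflect0, reflect]
  have hq : (2 * ⟪u, p⟫) • p - u ∈ Submodule.span ℝ {q | q ∈ P ∧ c * ⟪p, x⟫ ≤ ⟪q, x⟫} := by
    refine Submodule.subset_span ⟨hrefl ▸ hP.neg_mem (hP.reflect0_mem hp hu), ?_⟩
    rw [inner_sub_left, real_inner_smul_left]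
    nlinarith [mul_le_mul_of_nonneg_right hcu hpx.le]
  simpa using Submodule.sub_mem _ (Submodule.smul_mem _ (2 * ⟪u, p⟫) hpQ) hq

theorem span_setOf_sigma1_mul_le_inner (hN : 1 ≤ N) (hP : IsRootSystem P)
    (hspan : Submodule.span ℝ P = ⊤) {p x : E N} (hp : p ∈ P) (hpx : 0 < ⟪p, x⟫) :
    Submodule.span ℝ {q | q ∈ P ∧ sigma1 P * ⟪p, x⟫ ≤ ⟪q, x⟫} = ⊤ := by
  obtain ⟨w, hwP, hw⟩ := exists_basis_sigma1_le_abs_inner hP.1 hspan hp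
  have hσ1 : sigma1 P ≤ 1 := (hw ⟨0, hN⟩).trans (hP.abs_inner_le_one (hwP _) hp)
  rw [eq_top_iff, ← w.span_eq, Submodule.span_le]
  rintro _ ⟨i, rfl⟩
  rcases le_abs'.1 (hw i) with hneg | hpos
  · refine neg_neg (w i) ▸ Submodule.neg_mem _ ?_
    exact mem_span_setOf_mul_le_inner hP hp (hP.neg_mem (hwP i)) hpx hσ1
      (by rw [inner_neg_left]; linarith)
  · exact mem_span_setOf_mul_le_inner hP hp (hwP i) hpx hσ1 hpos

theorem exists_basis_le_inner_of_le_norm (hN : 1 ≤ N) (hP : IsRootSystem P) (hEA : CondEA P)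
    {m : ℝ} (hm : 0 < m) {x : E N} (hx : (sigma1 P)⁻¹ * sigma2 P * m ≤ ‖x‖) :
    ∃ b : Module.Basis (Fin N) ℝ (E N), (∀ i, b i ∈ P) ∧ ∀ i, m ≤ ⟪x, b i⟫ := by
  have hσ1 := sigma1_pos hN hP hEA
  have hσ2 := sigma2_pos hN hP hEA
  have hspan := hEA.span_eq_top hN
  have hx0 : x ≠ 0 := norm_pos_iff.1 (lt_of_lt_of_le (by positivity) hx)
  obtain ⟨p, hp, hpx, hnorm⟩ := exists_mem_norm_le_sigma2_mul_inner hP hspan hx0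
  obtain ⟨b, hb⟩ := exists_finBasis_forall_mem (span_setOf_sigma1_mul_le_inner hN hP hspan hp hpx)
  have hm_le : (sigma1 P)⁻¹ * m ≤ ⟪p, x⟫ :=
    le_of_mul_le_mul_left (by linarith : sigma2 P * ((sigma1 P)⁻¹ * m) ≤ _) hσ2
  refine ⟨b, fun i => (hb i).1, fun i => ?_⟩
  calc m ≤ sigma1 P * ⟪p, x⟫ := by rwa [inv_mul_le_iff₀ hσ1] at hm_le
    _ ≤ ⟪b i, x⟫ := (hb i).2
    _ = ⟪x, b i⟫ := real_inner_comm _ _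

end Margin

section Cone

variable (b : Module.Basis (Fin N) ℝ (E N))

theorem mem_cone_iff {t : ℝ} {x : E N} :
    x ∈ Cone t b ↔ (∀ i, 0 < b.repr x i) ∧ ∑ i, b.repr x i < t := by
  constructor
  · rintro ⟨a, ha, hsum, rfl⟩
    rw [b.repr_sum_self]
    exact ⟨ha, hsum⟩
  · exact fun ⟨ha, hsum⟩ => ⟨_, ha, hsum, (b.sum_repr x).symm⟩

theorem isOpen_cone (t : ℝ) : IsOpen (Cone t b) := by
  have hcone : Cone t b = {x | (∀ i, 0 < b.repr x i) ∧ ∑ i, b.repr x i < t} :=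
    Set.ext fun _ => mem_cone_iff b
  rw [hcone, Set.ofPred_and, Set.ofPred_forall]
  exact (isOpen_iInter_of_finite fun i => isOpen_lt continuous_const
    (b.continuous_repr_apply i)).inter (isOpen_lt
      (continuous_finsetSum _ fun i _ => b.continuous_repr_apply i) continuous_const)

theorem exists_forall_norm_lt_mem_cone {t : ℝ} (ht : 0 < t) :
    ∃ h > 0, ∀ w : E N, ‖w‖ < h → (∀ i, 0 < b.repr w i) → w ∈ Cone t b := by
  obtain ⟨h, hh, hball⟩ := Metric.isOpen_iff.1 (isOpen_lt (continuous_finsetSum _ fun i _ =>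
    b.continuous_repr_apply i) continuous_const) 0 (by simpa using ht)
  exact ⟨h, hh, fun w hw hpos => (mem_cone_iff b).2 ⟨hpos, hball (mem_ball_zero_iff.2 hw)⟩⟩

end Cone

namespace ReflProp

variable {P : Set (E N)} {ρ : ℝ} {Ω : Set (E N)}

/-- Reflecting `z + t • p` across the hyperplane `x·p = z·p + t/2`, which lies beyond `ρ`,
gives `z`; so (RP) would put `z` into `Ω`. -/
theorem add_smul_notMem (hRP : ReflProp P ρ Ω) {p z : E N} (hp : p ∈ P) (hp1 : ‖p‖ = 1)
    (hz : z ∉ Ω) (hzp : ρ < ⟪z, p⟫) {t : ℝ} (ht : 0 ≤ t) : z + t • p ∉ Ω := by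
  rcases ht.eq_or_lt with rfl | ht
  · simpa using hz
  intro hmem
  have hpp : ⟪p, p⟫ = 1 := by rw [real_inner_self_eq_norm_sq, hp1, one_pow]
  have hrefl : reflect p (⟪z, p⟫ + t / 2) (z + t • p) = z := by
    rw [reflect, inner_add_left, real_inner_smul_left, hpp]
    ring_nf
    exact add_sub_cancel_right z (t • p)
  exact hz (hRP p hp _ (by linarith) ⟨⟨_, hmem, hrefl⟩, show ⟪z, p⟫ < _ by linarith⟩).1

theorem add_sum_smul_notMem {ι : Type*} [Fintype ι] (hRP : ReflProp P ρ Ω) {v : ι → E N}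
    (hvP : ∀ i, v i ∈ P) (hv1 : ∀ i, ‖v i‖ = 1) {y : E N} (hy : y ∉ Ω) {a : ι → ℝ}
    (ha : ∀ i, 0 ≤ a i) (hmargin : ∀ i, ρ + ∑ j, a j < ⟪y, v i⟫) :
    y + ∑ j, a j • v j ∉ Ω := by
  classical
  suffices ∀ s : Finset ι, y + ∑ j ∈ s, a j • v j ∉ Ω from this Finset.univ
  intro s
  induction s using Finset.induction_on with
  | empty => simpa using hy
  | @insert j s hj ih =>
    rw [Finset.sum_insert hj, add_comm (a j • v j), ← add_assoc]
    refine add_smul_notMem hRP (hvP j) (hv1 j) ih ?_ (ha j)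
    have hinner : ∀ k, -a k ≤ a k * ⟪v k, v j⟫ := fun k => by
      have := abs_real_inner_le_norm (v k) (v j)
      rw [hv1 k, hv1 j, one_mul] at this
      nlinarith [neg_abs_le ⟪v k, v j⟫, ha k]
    have hdrift : -∑ k, a k ≤ ∑ k ∈ s, a k * ⟪v k, v j⟫ :=
      calc -∑ k, a k ≤ -∑ k ∈ s, a k := neg_le_neg <|
            Finset.sum_le_sum_of_subset_of_nonneg (Finset.subset_univ s) fun k _ _ => ha k
        _ = ∑ k ∈ s, -a k := (Finset.sum_neg_distrib _).symm
        _ ≤ ∑ k ∈ s, a k * ⟪v k, v j⟫ := Finset.sum_le_sum fun k _ => hinner k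
    have hexpand : ⟪y + ∑ k ∈ s, a k • v k, v j⟫ = ⟪y, v j⟫ + ∑ k ∈ s, a k * ⟪v k, v j⟫ := by
      simp [inner_add_left, sum_inner, real_inner_smul_left]
    linarith [hmargin j]

theorem sub_notMem_cone (hRP : ReflProp P ρ Ω) (hP : IsRootSystem P)
    (b : Module.Basis (Fin N) ℝ (E N)) (hbP : ∀ i, b i ∈ P) {t : ℝ} {x y : E N} (hx : x ∉ Ω)
    (hmargin : ∀ i, ρ + t ≤ ⟪x, b i⟫) (hy : y ∈ closure Ω) : y - x ∉ Cone t b := by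
  intro hyx
  obtain ⟨z, ⟨a, ha, hsum, hza⟩, hzΩ⟩ := mem_closure_iff.1 hy _
    ((isOpen_cone b t).preimage (continuous_sub_right x)) hyx
  refine add_sum_smul_notMem hRP hbP (fun i => hP.norm_eq_one (hbP i)) hx (fun i => (ha i).le)
    (fun i => by linarith [hmargin i]) ?_
  rwa [← hza, add_sub_cancel]

end ReflProp

section Projection

variable (b : Module.Basis (Fin N) ℝ (E N))

theorem exists_pos_mul_norm_le_orthogonalProjectionOnto :
    ∃ δ > 0, ∀ w : E N, (∃ i, b.repr w i ≤ 0) → (∃ i, 0 ≤ b.repr w i) →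
      δ * ‖w‖ ≤ ‖(ℝ ∙ ∑ i, b i)ᗮ.orthogonalProjectionOnto w‖ := by
  set K : Set (E N) := {w : E N | (∃ i, b.repr w i ≤ 0) ∧ ∃ i, 0 ≤ b.repr w i} with hK
  have hclosed : IsClosed K := by
    rw [hK, Set.ofPred_and, Set.ofPred_exists, Set.ofPred_exists]
    exact (isClosed_iUnion_of_finite fun i => isClosed_le (b.continuous_repr_apply i)
      continuous_const).inter (isClosed_iUnion_of_finite fun i => isClosed_le continuous_const
      (b.continuous_repr_apply i))
  have hsmul : ∀ c : ℝ, 0 < c → ∀ w ∈ K, c • w ∈ K := by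
    rintro c hc w ⟨⟨i, hi⟩, j, hj⟩
    refine ⟨⟨i, ?_⟩, j, ?_⟩ <;> simp only [map_smul, Finsupp.smul_apply, smul_eq_mul]
    exacts [mul_nonpos_of_nonneg_of_nonpos hc.le hi, mul_nonneg hc.le hj]
  have hker : ∀ w ∈ K, (ℝ ∙ ∑ i, b i)ᗮ.orthogonalProjectionOnto w = 0 → w = 0 := by
    rintro w ⟨⟨i, hi⟩, j, hj⟩ hw
    rw [Submodule.orthogonalProjectionOnto_eq_zero_iff, Submodule.orthogonal_orthogonal,
      Submodule.mem_span_singleton] at hw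
    obtain ⟨c, rfl⟩ := hw
    have hrepr : ∀ k, b.repr (c • ∑ i, b i) k = c := fun k => by simp [Finsupp.single_apply]
    rw [hrepr] at hi hj
    simp [le_antisymm hi hj]
  obtain ⟨δ, hδ, hle⟩ := exists_pos_mul_norm_le_of_smul_mem hclosed hsmul _ hker
  exact ⟨δ, hδ, fun w h₁ h₂ => hle w ⟨h₁, h₂⟩⟩

theorem exists_antilipschitzWith_orthogonalProjectionOnto {t : ℝ} (ht : 0 < t) :
    ∃ h > 0, ∃ K : ℝ≥0, ∀ G : Set (E N), (∀ x ∈ G, ∀ y ∈ G, dist x y < h) →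
      (∀ x ∈ G, ∀ y ∈ G, y - x ∉ Cone t b) →
      AntilipschitzWith K (G.domRestrict (ℝ ∙ ∑ i, b i)ᗮ.orthogonalProjectionOnto) := by
  obtain ⟨h, hh, hcone⟩ := exists_forall_norm_lt_mem_cone b ht
  obtain ⟨δ, hδ, hπ⟩ := exists_pos_mul_norm_le_orthogonalProjectionOnto b
  refine ⟨h, hh, (δ⁻¹).toNNReal, fun G hGh hG => ?_⟩
  refine AntilipschitzWith.of_le_mul_dist fun ⟨y, hy⟩ ⟨z, hz⟩ => ?_
  have hlt : ‖y - z‖ < h := dist_eq_norm y z ▸ hGh y hy z hz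
  have hneg : ∃ i, b.repr (y - z) i ≤ 0 := by
    by_contra! hpos
    exact hG z hz y hy (hcone _ hlt hpos)
  have hpos : ∃ i, 0 ≤ b.repr (y - z) i := by
    by_contra! hneg
    refine hG y hy z hz (hcone _ (norm_sub_rev y z ▸ hlt) fun i => ?_)
    rw [← neg_sub, map_neg, Finsupp.neg_apply]
    linarith [hneg i]
  rw [Real.coe_toNNReal _ (inv_nonneg.2 hδ.le), le_inv_mul_iff₀ hδ, Subtype.dist_eq,
    dist_eq_norm, dist_eq_norm, Set.domRestrict_apply, Set.domRestrict_apply, ← map_sub]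
  exact hπ _ hneg hpos

theorem finrank_orthogonal_span_sum_basis (hN : 1 ≤ N) :
    Module.finrank ℝ (ℝ ∙ ∑ i, b i)ᗮ = N - 1 := by
  have : Fact (Module.finrank ℝ (E N) = (N - 1) + 1) := ⟨by simp; omega⟩
  have hsum : ∑ i, b i ≠ 0 := fun h0 => by
    simpa [Finsupp.single_apply] using congrArg (b.repr · ⟨0, hN⟩) h0
  exact Submodule.finrank_orthogonal_span_singleton hsum

end Projection

theorem exists_hausdorffMeasure_le_of_sub_notMem_cone (hN : 1 ≤ N)
    (b : Module.Basis (Fin N) ℝ (E N)) {t : ℝ} (ht : 0 < t) (R : ℝ) :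
    ∃ B : ℝ≥0∞, B ≠ ∞ ∧ ∀ F ⊆ closedBall (0 : E N) R,
      (∀ x ∈ F, ∀ y ∈ F, y - x ∉ Cone t b) → μH[(N : ℝ) - 1] F ≤ B := by
  obtain ⟨h, hh, K, hK⟩ := exists_antilipschitzWith_orthogonalProjectionOnto b ht
  set W := (ℝ ∙ ∑ i, b i)ᗮ
  have hd : (N : ℝ) - 1 = Module.finrank ℝ W := by
    rw [finrank_orthogonal_span_sum_basis b hN, Nat.cast_sub hN, Nat.cast_one]
  obtain ⟨c, hc⟩ := (isCompact_closedBall (0 : E N) R).elim_finite_subcover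
    (fun x => ball x (h / 2)) (fun _ => isOpen_ball)
    fun x _ => Set.mem_iUnion.2 ⟨x, mem_ball_self (half_pos hh)⟩
  set B₀ := (K : ℝ≥0∞) ^ ((N : ℝ) - 1) * μH[(N : ℝ) - 1] (closedBall (0 : W) R)
  have hB₀ : B₀ ≠ ∞ := ENNReal.mul_ne_top (by rw [hd]; simp)
    (by rw [hd]; exact (isCompact_closedBall _ _).measure_lt_top.ne)
  refine ⟨c.card * B₀, ENNReal.mul_ne_top (ENNReal.natCast_ne_top _) hB₀, fun F hFR hF => ?_⟩
  have hpiece : ∀ x, μH[(N : ℝ) - 1] (F ∩ ball x (h / 2)) ≤ B₀ := by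
    intro x
    have hsmall : ∀ y ∈ F ∩ ball x (h / 2), ∀ z ∈ F ∩ ball x (h / 2), dist y z < h :=
      fun y hy z hz => by linarith [dist_triangle_right y z x, mem_ball.1 hy.2, mem_ball.1 hz.2]
    have hanti := hK _ hsmall fun y hy z hz => hF y hy.1 z hz.1
    calc μH[(N : ℝ) - 1] (F ∩ ball x (h / 2))
        ≤ (K : ℝ≥0∞) ^ ((N : ℝ) - 1) *
          μH[(N : ℝ) - 1] (W.orthogonalProjectionOnto '' (F ∩ ball x (h / 2))) :=
          le_hausdorffMeasure_image_of_antilipschitzWith_domRestrict hanti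
            (hd ▸ Nat.cast_nonneg _)
      _ ≤ B₀ := by
        refine mul_le_mul_right (measure_mono ?_) _
        rintro _ ⟨z, hz, rfl⟩
        simpa using (W.norm_orthogonalProjectionOnto_apply_le z).trans
          (mem_closedBall_zero_iff.1 (hFR hz.1))
  calc μH[(N : ℝ) - 1] F ≤ μH[(N : ℝ) - 1] (⋃ x ∈ c, F ∩ ball x (h / 2)) :=
        measure_mono fun y hy => by simpa [hy] using hc (hFR hy)
    _ ≤ ∑ x ∈ c, μH[(N : ℝ) - 1] (F ∩ ball x (h / 2)) := measure_biUnion_finset_le _ _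
    _ ≤ ∑ _x ∈ c, B₀ := Finset.sum_le_sum fun x _ => hpiece x
    _ = c.card * B₀ := by simp

theorem perimeter_bound_general (N : ℕ) (hN : 1 ≤ N) (P : Set (E N))
    (hP : IsRootSystem P) (hEA : CondEA P) (ρ r R : ℝ) (hρ : 0 ≤ ρ)
    (hr : 0 < r) :
    ∃ C > 0, ∀ Ω : Set (E N), IsOpen Ω → ReflProp P ρ Ω →
      ball (0 : E N) ((sigma1 P)⁻¹ * sigma2 P * (ρ + 2 * r)) ⊆ Ω →
      Ω ⊆ ball (0 : E N) R →
      μH[(N : ℝ) - 1] (frontier Ω) ≤ ENNReal.ofReal C := by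
  set S := {b : Module.Basis (Fin N) ℝ (E N) | ∀ i, b i ∈ P}
  have hS : S.Finite := (Set.Finite.pi' fun _ => hP.1).preimage DFunLike.coe_injective.injOn
  choose! B hB hBF using fun b (_ : b ∈ S) =>
    exists_hausdorffMeasure_le_of_sub_notMem_cone hN b (by positivity : 0 < 2 * r) R
  have hsum : ∑ b ∈ hS.toFinset, B b ≠ ∞ :=
    ENNReal.sum_ne_top.2 fun b hb => hB b (hS.mem_toFinset.1 hb)
  refine ⟨(∑ b ∈ hS.toFinset, B b).toReal + 1, by positivity, fun Ω hΩ hRP hball hΩR => ?_⟩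
  set F := fun b : Module.Basis (Fin N) ℝ (E N) =>
    frontier Ω ∩ {x | ∀ i, ρ + 2 * r ≤ ⟪x, b i⟫}
  have hcover : frontier Ω ⊆ ⋃ b ∈ hS.toFinset, F b := fun x hx => by
    have hxΩ : x ∉ Ω := (hΩ.frontier_eq ▸ hx).2
    obtain ⟨b, hbP, hb⟩ := exists_basis_le_inner_of_le_norm hN hP hEA
      (by positivity : 0 < ρ + 2 * r) (not_lt.1 fun h => hxΩ (hball (mem_ball_zero_iff.2 h)))
    exact Set.mem_biUnion (hS.mem_toFinset.2 hbP) ⟨hx, hb⟩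
  have hclosure : closure Ω ⊆ closedBall 0 R :=
    closure_minimal (hΩR.trans ball_subset_closedBall) isClosed_closedBall
  have hF : ∀ b ∈ S, μH[(N : ℝ) - 1] (F b) ≤ B b := fun b hb =>
    hBF b hb _ (fun x hx => hclosure (frontier_subset_closure hx.1)) fun x hx y hy =>
      hRP.sub_notMem_cone hP b hb (hΩ.frontier_eq ▸ hx.1).2 hx.2 (frontier_subset_closure hy.1)
  calc μH[(N : ℝ) - 1] (frontier Ω) ≤ ∑ b ∈ hS.toFinset, μH[(N : ℝ) - 1] (F b) :=
        (measure_mono hcover).trans (measure_biUnion_finset_le _ _)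
    _ ≤ ∑ b ∈ hS.toFinset, B b := Finset.sum_le_sum fun b hb => hF b (hS.mem_toFinset.1 hb)
    _ ≤ ENNReal.ofReal ((∑ b ∈ hS.toFinset, B b).toReal + 1) := by
        rw [ENNReal.ofReal_add ENNReal.toReal_nonneg zero_le_one, ENNReal.ofReal_toReal hsum]
        exact le_self_add

/-- uniform perimeter bound. -/
theorem perimeter_bound (N : ℕ) (hN : 1 ≤ N) (P : Set (E N))
    (hP : IsRootSystem P) (hEA : CondEA P) (ρ r R : ℝ) (hρ : 0 ≤ ρ)
    (hr : 0 < r) (hR : 0 < R) :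
    ∃ C > 0, ∀ Ω : Set (E N), IsOpen Ω → ReflProp P ρ Ω →
      ball (0 : E N) ((sigma1 P)⁻¹ * sigma2 P * (ρ + 2 * r)) ⊆ Ω →
      Ω ⊆ ball (0 : E N) R →
      μH[(N : ℝ) - 1] (frontier Ω) ≤ ENNReal.ofReal C :=
  perimeter_bound_general N hN P hP hEA ρ r R hρ hr
end
end

section
/- Let u_k : ℝ^N × ℝ → ℝ be a sequence of upper semicontinuous functions which is locally uniformly bounded, and define the upper half-relaxed limit u(x, t) := lim_{j→∞} sup{u_k(y, s) : k ≥ j, |y − x| ≤ 1/j, |s − t| ≤ 1/j}. Let r_k : ℝ → [0, ∞) be continuous functions converging locally uniformly to a (continuous, nonnegative) function r. Then for every (x, t) ∈ ℝ^N × ℝ, the equality sup_{y ∈ closedBall(x, r(t))} u(y, t) = lim_{j→∞} sup{ sup_{η ∈ closedBall(ξ, r_k(s))} u_k(η, s) : k ≥ j, |ξ − x| ≤ 1/j, |s − t| ≤ 1/j } holds; that is, the sup-convolution of the upper half-relaxed limit over the closed ball of radius r(t) equals the upper half-relaxed limit of the sup-convolutions over the closed balls of radii r_k. -/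
open scoped RealInnerProductSpace
open Metric Set MeasureTheory

noncomputable section

variable {N : ℕ}

/-- The upper half-relaxed limit (limsup-star) of a sequence of functions on
`ℝ^N × ℝ`: the limit as `j → ∞` of the (nonincreasing, for `j ≥ 1`) sequence of
suprema over `k ≥ j`, `|y - x| ≤ 1/j`, `|s - t| ≤ 1/j`; here indexed by `j + 1`. -/
def limsupStar (u : ℕ → E N × ℝ → ℝ) (x : E N) (t : ℝ) : ℝ :=
  ⨅ j : ℕ, sSup {a | ∃ k, j + 1 ≤ k ∧ ∃ y : E N, ∃ s : ℝ,
    ‖y - x‖ ≤ 1 / (j + 1 : ℝ) ∧ |s - t| ≤ 1 / (j + 1 : ℝ) ∧ a = u k (y, s)}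

/-! Local uniform boundedness of the `u k`, and of the radii `rk k` near `t`, keeps every supremum
in the definition of `limsupStar` finite, so the half-relaxed limit at `(x, t)` is characterised by
eventual and frequent bounds along `atTop ×ˢ 𝓝 (x, t)`.

Since `rk k s → r t` as `k → ∞` and `s → t`, a point `η` near `y ∈ closedBall x (r t)` lies within
`rk k s` of some `ξ` near `x`; hence `u k (η, s)` is dominated by the sup-convolution at `(ξ, s)`,
which gives `≤`. Conversely, when the sup-convolutions exceed `c` frequently near `(x, t)`, the
points `η` where `u k (·, s)` exceeds `c` stay bounded; by Bolzano–Weierstrass a subsequence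
converges to some `w ∈ closedBall x (r t)`, and `u` exceeds `c` frequently near `(w, t)`, which
gives `≥`. -/

open Filter Topology

section InfSupImage

variable {ι : Type*} {l : Filter ι} {s : ℕ → Set ι} {f : ι → ℝ} {M a : ℝ}

theorem Filter.HasBasis.iInf_sSup_image_le_of_eventually_le [l.NeBot]
    (hl : l.HasBasis (fun _ => True) s) (hf : ∀ j, ∀ i ∈ s j, |f i| ≤ M)
    (h : ∀ᶠ i in l, f i ≤ a) : ⨅ j, sSup (f '' s j) ≤ a := by
  have hbdd (j : ℕ) : BddAbove (f '' s j) :=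
    ⟨M, by rintro _ ⟨i, hi, rfl⟩; exact (abs_le.1 (hf j i hi)).2⟩
  have hne (j : ℕ) : (s j).Nonempty := nonempty_of_mem (hl.mem_of_mem trivial)
  have hlow (j : ℕ) : -M ≤ sSup (f '' s j) := by
    obtain ⟨i, hi⟩ := hne j
    exact (abs_le.1 (hf j i hi)).1.trans (le_csSup (hbdd j) ⟨i, hi, rfl⟩)
  obtain ⟨j, -, hj⟩ := hl.eventually_iff.1 h
  refine (ciInf_le ⟨-M, ?_⟩ j).trans (csSup_le ((hne j).image f) ?_)
  · rintro _ ⟨i, rfl⟩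
    exact hlow i
  · rintro _ ⟨i, hi, rfl⟩
    exact hj hi

theorem Filter.HasBasis.le_iInf_sSup_image_of_frequently_le
    (hl : l.HasBasis (fun _ => True) s) (hf : ∀ j, ∀ i ∈ s j, |f i| ≤ M)
    (h : ∃ᶠ i in l, a ≤ f i) : a ≤ ⨅ j, sSup (f '' s j) :=
  le_ciInf fun j => by
    obtain ⟨i, hi, hai⟩ := hl.frequently_iff.1 h j trivial
    refine hai.trans (le_csSup ⟨M, ?_⟩ ⟨i, hi, rfl⟩)
    rintro _ ⟨i', hi', rfl⟩
    exact (abs_le.1 (hf j i' hi')).2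

end InfSupImage

theorem Filter.hasBasis_atTop_prod_nhds_closedBall {X : Type*} [PseudoMetricSpace X] (x : X) :
    (atTop ×ˢ 𝓝 x).HasBasis (fun _ => True)
      fun j : ℕ => Ioi j ×ˢ closedBall x (1 / (j + 1)) :=
  atTop_basis_Ioi.prod_same_index_anti nhds_basis_closedBall_inv_nat_succ
    (fun _ _ _ _ hij => Ioi_subset_Ioi hij)
    (fun _ _ _ _ hij => closedBall_subset_closedBall
      (one_div_le_one_div_of_le (by positivity) (by gcongr)))

section LimsupStar

variable {u : ℕ → E N × ℝ → ℝ} {x : E N} {t M a : ℝ}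

theorem limsupStar_eq_iInf_sSup_image (u : ℕ → E N × ℝ → ℝ) (x : E N) (t : ℝ) :
    limsupStar u x t =
      ⨅ j : ℕ, sSup (Function.uncurry u '' (Ioi j ×ˢ closedBall (x, t) (1 / (j + 1)))) := by
  refine iInf_congr fun j => congrArg sSup (Set.ext fun a => ?_)
  simp only [mem_ofPred_eq, mem_image, mem_prod, mem_Ioi, mem_closedBall, Prod.exists,
    Prod.dist_eq, max_le_iff, ← dist_eq_norm, ← Real.dist_eq, Function.uncurry_apply_pair,
    Nat.lt_iff_add_one_le, eq_comm (a := a), and_assoc, exists_and_left]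

variable (hu : ∀ k, ∀ z ∈ closedBall (x, t) 1, |u k z| ≤ M)
include hu

theorem abs_uncurry_le_of_mem_Ioi_prod_closedBall (j : ℕ) :
    ∀ p ∈ Ioi j ×ˢ closedBall (x, t) (1 / (j + 1)), |Function.uncurry u p| ≤ M :=
  fun p hp => hu p.1 p.2 <| closedBall_subset_closedBall
    (div_le_one_of_le₀ (le_add_of_nonneg_left j.cast_nonneg) (by positivity)) hp.2

theorem limsupStar_le_of_eventually_le (h : ∀ᶠ p in atTop ×ˢ 𝓝 (x, t), u p.1 p.2 ≤ a) :
    limsupStar u x t ≤ a := by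
  rw [limsupStar_eq_iInf_sSup_image]
  exact (hasBasis_atTop_prod_nhds_closedBall (x, t)).iInf_sSup_image_le_of_eventually_le
    (abs_uncurry_le_of_mem_Ioi_prod_closedBall hu) h

theorem le_limsupStar_of_frequently_le (h : ∃ᶠ p in atTop ×ˢ 𝓝 (x, t), a ≤ u p.1 p.2) :
    a ≤ limsupStar u x t := by
  rw [limsupStar_eq_iInf_sSup_image]
  exact (hasBasis_atTop_prod_nhds_closedBall (x, t)).le_iInf_sSup_image_of_frequently_le
    (abs_uncurry_le_of_mem_Ioi_prod_closedBall hu) h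

theorem limsupStar_le_of_forall_abs_le : limsupStar u x t ≤ M :=
  limsupStar_le_of_eventually_le hu <|
    (Eventually.prod_inr (closedBall_mem_nhds (x, t) one_pos) atTop).mono fun p hp =>
      (abs_le.1 (hu p.1 p.2 hp)).2

theorem eventually_lt_of_limsupStar_lt (h : limsupStar u x t < a) :
    ∀ᶠ p in atTop ×ˢ 𝓝 (x, t), u p.1 p.2 < a := by
  by_contra hev
  simp only [not_eventually, not_lt] at hev
  exact h.not_ge (le_limsupStar_of_frequently_le hu hev)

theorem frequently_lt_of_lt_limsupStar (h : a < limsupStar u x t) :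
    ∃ᶠ p in atTop ×ˢ 𝓝 (x, t), a < u p.1 p.2 := by
  by_contra hfreq
  simp only [not_frequently, not_lt] at hfreq
  exact h.not_ge (limsupStar_le_of_eventually_le hu hfreq)

end LimsupStar

theorem TendstoLocallyUniformly.tendsto_prod_nhds {ι X : Type*} [TopologicalSpace X]
    {F : ι → X → ℝ} {f : X → ℝ} {p : Filter ι} {x : X} (h : TendstoLocallyUniformly F f p)
    (hf : ContinuousAt f x) :
    Tendsto (fun q : ι × X => F q.1 q.2) (p ×ˢ 𝓝 x) (𝓝 (f x)) :=
  tendsto_comp_of_locally_uniform_limit (F := fun q : ι × X => F q.1) hf tendsto_snd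
    fun U hU => (h U hU x).imp fun _ ⟨hs, hev⟩ => ⟨hs, tendsto_fst.eventually hev⟩

theorem TendstoLocallyUniformly.exists_forall_le_of_isCompact {X : Type*} [TopologicalSpace X]
    {F : ℕ → X → ℝ} {f : X → ℝ} (h : TendstoLocallyUniformly F f atTop)
    (hF : ∀ n, Continuous (F n)) {K : Set X} (hK : IsCompact K) :
    ∃ R, ∀ n, ∀ x ∈ K, F n x ≤ R := by
  have hunif : TendstoUniformlyOn F f atTop K :=
    (tendstoLocallyUniformlyOn_iff_tendstoUniformlyOn_of_compact hK).1 h.tendstoLocallyUniformlyOn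
  obtain ⟨n₀, hn₀⟩ := eventually_atTop.1 (Metric.tendstoUniformlyOn_iff.1 hunif 1 one_pos)
  obtain ⟨A, hA⟩ := hK.bddAbove_image (h.continuous (.of_forall hF)).continuousOn
  obtain ⟨B, hB⟩ := (finite_Iio n₀).bddAbove_biUnion.2 fun n _ =>
    hK.bddAbove_image (hF n).continuousOn
  refine ⟨max (A + 1) B, fun n x hx => ?_⟩
  rcases lt_or_ge n n₀ with hn | hn
  · exact (hB (mem_biUnion hn ⟨x, hx, rfl⟩)).trans (le_max_right _ _)
  · have hclose := hn₀ n hn x hx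
    rw [Real.dist_eq, abs_lt] at hclose
    exact le_max_of_le_left (by linarith [hA ⟨x, hx, rfl⟩])

section SupConvolution

variable {X : Type*} [PseudoMetricSpace X]

def supConv (u : ℕ → X × ℝ → ℝ) (ρ : ℕ → ℝ → ℝ) (k : ℕ) (z : X × ℝ) : ℝ :=
  sSup ((fun η => u k (η, z.2)) '' closedBall z.1 (ρ k z.2))

variable {u : ℕ → X × ℝ → ℝ} {ρ : ℕ → ℝ → ℝ} {k : ℕ} {z : X × ℝ} {M c : ℝ}

theorem le_supConv (hu : ∀ η ∈ closedBall z.1 (ρ k z.2), |u k (η, z.2)| ≤ M) {η : X}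
    (hη : η ∈ closedBall z.1 (ρ k z.2)) : u k (η, z.2) ≤ supConv u ρ k z := by
  refine le_csSup ⟨M, ?_⟩ ⟨η, hη, rfl⟩
  rintro _ ⟨η', hη', rfl⟩
  exact (abs_le.1 (hu η' hη')).2

theorem abs_supConv_le (hρ : 0 ≤ ρ k z.2)
    (hu : ∀ η ∈ closedBall z.1 (ρ k z.2), |u k (η, z.2)| ≤ M) : |supConv u ρ k z| ≤ M := by
  have hne : (closedBall z.1 (ρ k z.2)).Nonempty := nonempty_closedBall.2 hρ
  refine abs_le.2 ⟨?_, csSup_le (hne.image _) ?_⟩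
  · obtain ⟨η, hη⟩ := hne
    exact (abs_le.1 (hu η hη)).1.trans (le_supConv hu hη)
  · rintro _ ⟨η, hη, rfl⟩
    exact (abs_le.1 (hu η hη)).2

theorem exists_lt_of_lt_supConv (hρ : 0 ≤ ρ k z.2) (h : c < supConv u ρ k z) :
    ∃ η ∈ closedBall z.1 (ρ k z.2), c < u k (η, z.2) := by
  obtain ⟨_, ⟨η, hη, rfl⟩, hc⟩ := exists_lt_of_lt_csSup ((nonempty_closedBall.2 hρ).image _) h
  exact ⟨η, hη, hc⟩

end SupConvolution

section ClosedBallFamily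

variable {ρ : ℕ → ℝ → ℝ} {t ρ₀ : ℝ}
  (hρ : Tendsto (fun q : ℕ × ℝ => ρ q.1 q.2) (atTop ×ˢ 𝓝 t) (𝓝 ρ₀))
include hρ

theorem exists_frequently_of_frequently_exists_closedBall {X : Type*} [PseudoMetricSpace X]
    [ProperSpace X] {x : X} {P : ℕ → X × ℝ → Prop}
    (h : ∃ᶠ p in atTop ×ˢ 𝓝 (x, t), ∃ η ∈ closedBall p.2.1 (ρ p.1 p.2.2), P p.1 (η, p.2.2)) :
    ∃ w ∈ closedBall x ρ₀, ∃ᶠ p in atTop ×ˢ 𝓝 (w, t), P p.1 p.2 := by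
  obtain ⟨q, hq, hqP⟩ := frequently_iff_seq_forall.1 h
  choose η hη hP using hqP
  have hk : Tendsto (fun n => (q n).1) atTop atTop := tendsto_fst.comp hq
  have hξ : Tendsto (fun n => (q n).2.1) atTop (𝓝 x) :=
    ((continuous_fst.tendsto (x, t)).comp tendsto_snd).comp hq
  have hs : Tendsto (fun n => (q n).2.2) atTop (𝓝 t) :=
    ((continuous_snd.tendsto (x, t)).comp tendsto_snd).comp hq
  have hr : Tendsto (fun n => ρ (q n).1 (q n).2.2 + dist (q n).2.1 x) atTop (𝓝 ρ₀) := by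
    simpa using (hρ.comp (hk.prodMk hs)).add (tendsto_iff_dist_tendsto_zero.1 hξ)
  have hηx (n : ℕ) : dist (η n) x ≤ ρ (q n).1 (q n).2.2 + dist (q n).2.1 x :=
    (dist_triangle _ _ _).trans (add_le_add_left (hη n) _)
  obtain ⟨w, -, φ, hφ, hw⟩ := tendsto_subseq_of_frequently_bounded
    (isBounded_closedBall (x := x) (r := ρ₀ + 1))
    ((hr.eventually (gt_mem_nhds (lt_add_one ρ₀))).mono fun n hn => (hηx n).trans hn.le).frequently
  refine ⟨w, le_of_tendsto_of_tendsto' (hw.dist tendsto_const_nhds)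
    (hr.comp hφ.tendsto_atTop) fun n => hηx (φ n), ?_⟩
  exact ((hk.comp hφ.tendsto_atTop).prodMk (hw.prodMk_nhds (hs.comp hφ.tendsto_atTop))).frequently
    (.of_forall fun n => hP (φ n))

theorem eventually_of_eventually_forall_closedBall {X : Type*} [NormedAddCommGroup X]
    [NormedSpace ℝ X] [ProperSpace X] {x y : X} {P : ℕ → X × ℝ → Prop} (hρ0 : ∀ k s, 0 ≤ ρ k s)
    (hy : y ∈ closedBall x ρ₀)
    (h : ∀ᶠ p in atTop ×ˢ 𝓝 (x, t), ∀ η ∈ closedBall p.2.1 (ρ p.1 p.2.2), P p.1 (η, p.2.2)) :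
    ∀ᶠ p in atTop ×ˢ 𝓝 (y, t), P p.1 p.2 := by
  obtain ⟨j, -, hj⟩ := (hasBasis_atTop_prod_nhds_closedBall (x, t)).eventually_iff.1 h
  set δ : ℝ := 1 / (j + 1)
  have hδ : 0 < δ := by positivity
  have hk : ∀ᶠ p : ℕ × (X × ℝ) in atTop ×ˢ 𝓝 (y, t), j < p.1 :=
    (eventually_gt_atTop j).prod_inl _
  have hz : ∀ᶠ p : ℕ × (X × ℝ) in atTop ×ˢ 𝓝 (y, t), p.2 ∈ closedBall (y, t) (δ / 2) :=
    Eventually.prod_inr (closedBall_mem_nhds _ (half_pos hδ)) _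
  have hr : ∀ᶠ p : ℕ × (X × ℝ) in atTop ×ˢ 𝓝 (y, t), ρ₀ - δ / 2 < ρ p.1 p.2.2 :=
    (hρ.comp (tendsto_id.prodMap (continuous_snd.tendsto (y, t)))).eventually
      (lt_mem_nhds (by linarith))
  filter_upwards [hk, hz, hr] with ⟨k, η, s⟩ hk hz hr
  rw [mem_closedBall, Prod.dist_eq, max_le_iff] at hz
  -- `η` splits as `d + ξ` with `‖d‖ ≤ ρ k s` and `ξ` within `δ` of `x`.
  have hη : η ∈ closedBall (0 + x) (ρ k s + δ) := by
    rw [zero_add, mem_closedBall]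
    linarith [dist_triangle η y x, mem_closedBall.1 hy]
  rw [← closedBall_add_closedBall (hρ0 k s) hδ.le] at hη
  obtain ⟨d, hd, ξ, hξ, rfl⟩ := hη
  refine hj (show (k, (ξ, s)) ∈ Ioi j ×ˢ closedBall (x, t) δ from ⟨hk, ?_⟩) (d + ξ) ?_
  · rw [mem_closedBall, Prod.dist_eq, max_le_iff]
    exact ⟨hξ, by linarith⟩
  · simpa [mem_closedBall, dist_eq_norm] using hd

end ClosedBallFamily

theorem exists_abs_le_near_closedBall {X : Type*} [PseudoMetricSpace X] [ProperSpace X]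
    {u : ℕ → X × ℝ → ℝ} (hbd : ∀ K : Set (X × ℝ), IsCompact K → ∃ M > 0, ∀ k, ∀ z ∈ K, |u k z| ≤ M)
    {ρ : ℕ → ℝ → ℝ} {t R : ℝ} (hR : ∀ k, ∀ s ∈ closedBall t 1, ρ k s ≤ R) (x : X) :
    ∃ M, (∀ y ∈ closedBall x R, ∀ k, ∀ z ∈ closedBall (y, t) 1, |u k z| ≤ M) ∧
      ∀ k, ∀ z ∈ closedBall (x, t) 1, ∀ η ∈ closedBall z.1 (ρ k z.2), |u k (η, z.2)| ≤ M := by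
  obtain ⟨M, -, hM⟩ := hbd _ ((isCompact_closedBall x (R + 1)).prod (isCompact_closedBall t 1))
  refine ⟨M, fun y hy k z hz => ?_, fun k z hz η hη => ?_⟩
  · rw [← closedBall_prod_same] at hz
    refine hM k z ⟨mem_closedBall.2 ?_, hz.2⟩
    linarith [dist_triangle z.1 y x, mem_closedBall.1 hy, mem_closedBall.1 hz.1]
  · rw [← closedBall_prod_same] at hz
    refine hM k _ ⟨mem_closedBall.2 ?_, hz.2⟩
    linarith [dist_triangle η z.1 x, mem_closedBall.1 hη, mem_closedBall.1 hz.1, hR k z.2 hz.2]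

section SupConvolutionLimsupStar

variable {u : ℕ → E N × ℝ → ℝ} {ρ : ℕ → ℝ → ℝ} {x : E N} {t ρ₀ M : ℝ}
  (hρ : Tendsto (fun q : ℕ × ℝ => ρ q.1 q.2) (atTop ×ˢ 𝓝 t) (𝓝 ρ₀)) (hρ0 : ∀ k s, 0 ≤ ρ k s)
  (hv : ∀ k, ∀ z ∈ closedBall (x, t) 1, ∀ η ∈ closedBall z.1 (ρ k z.2), |u k (η, z.2)| ≤ M)
include hρ hρ0 hv

theorem limsupStar_le_limsupStar_supConv {y : E N} (hy : y ∈ closedBall x ρ₀)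
    (hu : ∀ k, ∀ z ∈ closedBall (y, t) 1, |u k z| ≤ M) :
    limsupStar u y t ≤ limsupStar (supConv u ρ) x t := by
  refine le_of_forall_gt_imp_ge_of_dense fun c hc => limsupStar_le_of_eventually_le hu ?_
  have hlt := eventually_lt_of_limsupStar_lt
    (fun k z hz => abs_supConv_le (hρ0 _ _) (hv k z hz)) hc
  have hnear : ∀ᶠ p : ℕ × (E N × ℝ) in atTop ×ˢ 𝓝 (x, t), p.2 ∈ closedBall (x, t) 1 :=
    Eventually.prod_inr (closedBall_mem_nhds _ one_pos) _
  refine (eventually_of_eventually_forall_closedBall (P := fun k z => u k z < c) hρ hρ0 hy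
    ((hlt.and hnear).mono ?_)).mono fun _ => le_of_lt
  rintro ⟨k, z⟩ ⟨hvc, hz⟩ η hη
  exact (le_supConv (hv k z hz) hη).trans_lt hvc

theorem exists_le_limsupStar_of_lt_limsupStar_supConv
    (hu : ∀ y ∈ closedBall x ρ₀, ∀ k, ∀ z ∈ closedBall (y, t) 1, |u k z| ≤ M) {c : ℝ}
    (hc : c < limsupStar (supConv u ρ) x t) : ∃ w ∈ closedBall x ρ₀, c ≤ limsupStar u w t := by
  have hfreq := frequently_lt_of_lt_limsupStar
    (fun k z hz => abs_supConv_le (hρ0 _ _) (hv k z hz)) hc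
  obtain ⟨w, hw, hcw⟩ := exists_frequently_of_frequently_exists_closedBall
    (P := fun k z => c < u k z) hρ (hfreq.mono fun _ hp => exists_lt_of_lt_supConv (hρ0 _ _) hp)
  exact ⟨w, hw, le_limsupStar_of_frequently_le (hu w hw) (hcw.mono fun _ => le_of_lt)⟩

end SupConvolutionLimsupStar

theorem supConvolution_limsupStar_general (N : ℕ) (u : ℕ → E N × ℝ → ℝ)
    (hbd : ∀ K : Set (E N × ℝ), IsCompact K → ∃ M > 0, ∀ k, ∀ z ∈ K, |u k z| ≤ M)
    (rk : ℕ → ℝ → ℝ) (hrkc : ∀ k, Continuous (rk k)) (hrknn : ∀ k t, 0 ≤ rk k t)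
    (r : ℝ → ℝ)
    (hconv : TendstoLocallyUniformly rk r Filter.atTop)
    (x : E N) (t : ℝ) :
    sSup ((fun y => limsupStar u y t) '' closedBall x (r t)) =
      limsupStar
        (fun k z => sSup ((fun η => u k (η, z.2)) '' closedBall z.1 (rk k z.2))) x t := by
  have hρ := hconv.tendsto_prod_nhds (hconv.continuous (.of_forall hrkc)).continuousAt (x := t)
  have hrkt : Tendsto (fun k => rk k t) atTop (𝓝 (r t)) :=
    hρ.comp (tendsto_id.prodMk tendsto_const_nhds)
  have hrt : 0 ≤ r t := ge_of_tendsto' hrkt fun k => hrknn k t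
  obtain ⟨R, hR⟩ := hconv.exists_forall_le_of_isCompact hrkc (isCompact_closedBall t 1)
  have hrR : r t ≤ R := le_of_tendsto' hrkt fun k => hR k t (mem_closedBall_self zero_le_one)
  obtain ⟨M, hu, hv⟩ := exists_abs_le_near_closedBall hbd hR x
  replace hu := fun y hy => hu y (closedBall_subset_closedBall hrR hy)
  apply le_antisymm
  · exact csSup_le ((nonempty_closedBall.2 hrt).image _) fun _ ⟨y, hy, hUy⟩ =>
      hUy ▸ limsupStar_le_limsupStar_supConv hρ hrknn hv hy (hu y hy)
  · refine le_of_forall_lt_imp_le_of_dense fun c hc => ?_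
    obtain ⟨w, hw, hcw⟩ := exists_le_limsupStar_of_lt_limsupStar_supConv hρ hrknn hv hu hc
    refine hcw.trans (le_csSup ⟨M, ?_⟩ ⟨w, hw, rfl⟩)
    rintro _ ⟨y, hy, rfl⟩
    exact limsupStar_le_of_forall_abs_le (hu y hy)

/-- the sup-convolution over the closed ball of radius `r(t)` of the
upper half-relaxed limit equals the upper half-relaxed limit of the sup-convolutions
over closed balls of radii `r_k`. -/
theorem supConvolution_limsupStar (N : ℕ) (hN : 1 ≤ N) (u : ℕ → E N × ℝ → ℝ)
    (husc : ∀ k, UpperSemicontinuous (u k))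
    (hbd : ∀ K : Set (E N × ℝ), IsCompact K → ∃ M > 0, ∀ k, ∀ z ∈ K, |u k z| ≤ M)
    (rk : ℕ → ℝ → ℝ) (hrkc : ∀ k, Continuous (rk k)) (hrknn : ∀ k t, 0 ≤ rk k t)
    (r : ℝ → ℝ) (hrc : Continuous r) (hrnn : ∀ t, 0 ≤ r t)
    (hconv : TendstoLocallyUniformly rk r Filter.atTop)
    (x : E N) (t : ℝ) :
    sSup ((fun y => limsupStar u y t) '' closedBall x (r t)) =
      limsupStar
        (fun k z => sSup ((fun η => u k (η, z.2)) '' closedBall z.1 (rk k z.2))) x t :=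
  supConvolution_limsupStar_general N u hbd rk hrkc hrknn r hconv x t
end
end

section
/- Let N = 2 and let P := {(cos(kπ/4), sin(kπ/4)) : 0 ≤ k < 8} be the set of eight unit vectors in ℝ², i.e., P = {±e₁, ±e₂, ±(e₁+e₂)/√2, ±(e₁−e₂)/√2}. Then σ1(P) = 1/√2 and σ2(P) = 1/cos(π/8) = √(4 − 2√2); moreover the set D := {(x₁, x₂) ∈ ℝ² : |p·x| ≤ 1 for all p ∈ P} equals the regular octagon {(x₁, x₂) : |x₁| ≤ 1, |x₂| ≤ 1, |x₁ + x₂| ≤ √2, |x₁ − x₂| ≤ √2}. -/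
open scoped RealInnerProductSpace
open Metric Set MeasureTheory

noncomputable section

variable {N : ℕ}

/-- The vector `(a, b)` in `ℝ²`. -/
def vec2 (a b : ℝ) : E 2 := (WithLp.equiv 2 (Fin 2 → ℝ)).symm ![a, b]

/-- The eight unit vectors `(cos(kπ/4), sin(kπ/4))`, `0 ≤ k < 8`. -/
def Poct : Set (E 2) :=
  {p | ∃ k : ℕ, k < 8 ∧
    p = vec2 (Real.cos (k * Real.pi / 4)) (Real.sin (k * Real.pi / 4))}


/-! ### Auxiliary lemmas -/

lemma vec2_apply0 (a b : ℝ) : vec2 a b 0 = a := rfl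
lemma vec2_apply1 (a b : ℝ) : vec2 a b 1 = b := rfl

lemma inner_vec2 (a b : ℝ) (x : E 2) : ⟪vec2 a b, x⟫ = a * x 0 + b * x 1 := by
  simp [PiLp.inner_apply, Fin.sum_univ_two, vec2_apply0, vec2_apply1, RCLike.inner_apply,
    mul_comm]

lemma vec2_eq_iff (a b a' b' : ℝ) : vec2 a b = vec2 a' b' ↔ a = a' ∧ b = b' := by
  constructor
  · intro h
    constructor
    · have := congrFun (congrArg (fun (z : E 2) (i : Fin 2) => z i) h) 0; exact this
    · have := congrFun (congrArg (fun (z : E 2) (i : Fin 2) => z i) h) 1; exact this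
  · rintro ⟨rfl, rfl⟩; rfl

lemma neg_vec2 (a b : ℝ) : -vec2 a b = vec2 (-a) (-b) := by
  ext i; fin_cases i <;> rfl

lemma range_fin_two (f : Fin 2 → ℝ) : Set.range f = {f 0, f 1} := by
  ext x
  simp [Set.range, Fin.exists_fin_two, eq_comm]

notation "c₈" => (Real.sqrt 2 / 2)

lemma Poct_eq : Poct = {vec2 1 0, vec2 c₈ c₈, vec2 0 1, vec2 (-c₈) c₈,
    vec2 (-1) 0, vec2 (-c₈) (-c₈), vec2 0 (-1), vec2 c₈ (-c₈)} := by
  have e0 : ((0:ℕ):ℝ) * Real.pi / 4 = 0 := by push_cast; ring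
  have e1 : ((1:ℕ):ℝ) * Real.pi / 4 = Real.pi / 4 := by push_cast; ring
  have e2 : ((2:ℕ):ℝ) * Real.pi / 4 = Real.pi / 2 := by push_cast; ring
  have e3 : ((3:ℕ):ℝ) * Real.pi / 4 = Real.pi - Real.pi / 4 := by push_cast; ring
  have e4 : ((4:ℕ):ℝ) * Real.pi / 4 = Real.pi := by push_cast; ring
  have e5 : ((5:ℕ):ℝ) * Real.pi / 4 = Real.pi + Real.pi / 4 := by push_cast; ring
  have e6 : ((6:ℕ):ℝ) * Real.pi / 4 = Real.pi + Real.pi / 2 := by push_cast; ring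
  have e7 : ((7:ℕ):ℝ) * Real.pi / 4 = 2 * Real.pi - Real.pi / 4 := by push_cast; ring
  ext p
  simp only [Poct, Set.mem_setOf_eq, Set.mem_insert_iff, Set.mem_singleton_iff]
  constructor
  · rintro ⟨k, hk, rfl⟩
    interval_cases k
    · rw [e0]; simp [vec2_eq_iff]
    · rw [e1]; simp [vec2_eq_iff, Real.cos_pi_div_four, Real.sin_pi_div_four]
    · rw [e2]; simp [vec2_eq_iff]
    · rw [e3]; simp [vec2_eq_iff, Real.cos_pi_sub, Real.sin_pi_sub,
        Real.cos_pi_div_four, Real.sin_pi_div_four]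
    · rw [e4]; simp [vec2_eq_iff]
    · rw [e5]; simp [vec2_eq_iff, Real.cos_add, Real.sin_add,
        Real.cos_pi_div_four, Real.sin_pi_div_four]
    · rw [e6]; simp [vec2_eq_iff, Real.cos_add, Real.sin_add]
    · rw [e7]; simp [vec2_eq_iff, Real.cos_sub, Real.sin_sub, Real.cos_two_pi,
        Real.sin_two_pi, Real.cos_pi_div_four, Real.sin_pi_div_four]
  · rintro (rfl|rfl|rfl|rfl|rfl|rfl|rfl|rfl)
    · exact ⟨0, by norm_num, by rw [e0]; simp⟩
    · exact ⟨1, by norm_num, by rw [e1]; simp [Real.cos_pi_div_four, Real.sin_pi_div_four]⟩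
    · exact ⟨2, by norm_num, by rw [e2]; simp⟩
    · exact ⟨3, by norm_num, by rw [e3]; simp [Real.cos_pi_sub, Real.sin_pi_sub,
        Real.cos_pi_div_four, Real.sin_pi_div_four]⟩
    · exact ⟨4, by norm_num, by rw [e4]; simp⟩
    · exact ⟨5, by norm_num, by rw [e5]; simp [Real.cos_add, Real.sin_add,
        Real.cos_pi_div_four, Real.sin_pi_div_four]⟩
    · exact ⟨6, by norm_num, by rw [e6]; simp [Real.cos_add, Real.sin_add]⟩
    · exact ⟨7, by norm_num, by rw [e7]; simp [Real.cos_sub, Real.sin_sub, Real.cos_two_pi,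
        Real.sin_two_pi, Real.cos_pi_div_four, Real.sin_pi_div_four]⟩

lemma sqrt2_mul_self : Real.sqrt 2 * Real.sqrt 2 = 2 := Real.mul_self_sqrt (by norm_num)

lemma sqrt2_pos : (0:ℝ) < Real.sqrt 2 := Real.sqrt_pos.mpr (by norm_num)

lemma sqrt2_lt_two : Real.sqrt 2 < 2 := by
  nlinarith [sqrt2_mul_self, sqrt2_pos]

lemma one_lt_sqrt2 : (1:ℝ) < Real.sqrt 2 := by
  nlinarith [sqrt2_mul_self, sqrt2_pos]

lemma abs_c8_mul (t : ℝ) : |c₈ * t| ≤ 1 ↔ |t| ≤ Real.sqrt 2 := by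
  rw [abs_mul, abs_of_nonneg (by positivity : (0:ℝ) ≤ c₈)]
  constructor
  · intro h; nlinarith [sqrt2_mul_self, sqrt2_pos, abs_nonneg t]
  · intro h; nlinarith [sqrt2_mul_self, sqrt2_pos, abs_nonneg t]

/-- Identification of `D` as the regular octagon. -/
lemma Dset_eq : {x : E 2 | ∀ p ∈ Poct, |⟪p, x⟫| ≤ 1} =
    {x : E 2 | |x 0| ≤ 1 ∧ |x 1| ≤ 1 ∧
      |x 0 + x 1| ≤ Real.sqrt 2 ∧ |x 0 - x 1| ≤ Real.sqrt 2} := by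
  ext x
  simp only [Set.mem_setOf_eq, Poct_eq, Set.mem_insert_iff, Set.mem_singleton_iff]
  constructor
  · intro h
    refine ⟨?_, ?_, ?_, ?_⟩
    · have := h (vec2 1 0) (by tauto); rw [inner_vec2] at this
      simpa using this
    · have := h (vec2 0 1) (by tauto); rw [inner_vec2] at this
      simpa using this
    · have := h (vec2 c₈ c₈) (by tauto); rw [inner_vec2] at this
      rw [show c₈ * x 0 + c₈ * x 1 = c₈ * (x 0 + x 1) by ring, abs_c8_mul] at this
      exact this
    · have := h (vec2 c₈ (-c₈)) (by tauto); rw [inner_vec2] at this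
      rw [show c₈ * x 0 + -c₈ * x 1 = c₈ * (x 0 - x 1) by ring, abs_c8_mul] at this
      exact this
  · rintro ⟨h1, h2, h3, h4⟩ p (rfl|rfl|rfl|rfl|rfl|rfl|rfl|rfl) <;> rw [inner_vec2]
    · simpa using h1
    · rw [show c₈ * x 0 + c₈ * x 1 = c₈ * (x 0 + x 1) by ring, abs_c8_mul]; exact h3
    · simpa using h2
    · rw [show -c₈ * x 0 + c₈ * x 1 = -(c₈ * (x 0 - x 1)) by ring, abs_neg, abs_c8_mul]
      exact h4
    · rw [show (-1) * x 0 + 0 * x 1 = -(x 0) by ring, abs_neg]; exact h1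
    · rw [show -c₈ * x 0 + -c₈ * x 1 = -(c₈ * (x 0 + x 1)) by ring, abs_neg, abs_c8_mul]
      exact h3
    · rw [show 0 * x 0 + (-1) * x 1 = -(x 1) by ring, abs_neg]; exact h2
    · rw [show c₈ * x 0 + -c₈ * x 1 = c₈ * (x 0 - x 1) by ring, abs_c8_mul]; exact h4

lemma norm_E2 (x : E 2) : ‖x‖ = Real.sqrt (x 0 ^ 2 + x 1 ^ 2) := by
  rw [EuclideanSpace.norm_eq]
  simp [Fin.sum_univ_two, sq_abs, Real.norm_eq_abs]

lemma oct_sq_bound {a b : ℝ} (h1 : |a| ≤ 1) (h2 : |b| ≤ 1)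
    (h3 : |a + b| ≤ Real.sqrt 2) (h4 : |a - b| ≤ Real.sqrt 2) :
    a ^ 2 + b ^ 2 ≤ 4 - 2 * Real.sqrt 2 := by
  have s2 := sqrt2_mul_self
  have s0 := sqrt2_pos
  rw [abs_le] at h1 h2 h3 h4
  have ha : |a| ≤ 1 := abs_le.mpr h1
  have hb : |b| ≤ 1 := abs_le.mpr h2
  have hab : |a| + |b| ≤ Real.sqrt 2 := by
    rcases le_or_gt 0 a with ha0 | ha0 <;> rcases le_or_gt 0 b with hb0 | hb0
    · rw [abs_of_nonneg ha0, abs_of_nonneg hb0]; linarith [h3.2]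
    · rw [abs_of_nonneg ha0, abs_of_neg hb0]; linarith [h4.2]
    · rw [abs_of_neg ha0, abs_of_nonneg hb0]; linarith [h4.1]
    · rw [abs_of_neg ha0, abs_of_neg hb0]; linarith [h3.1]
  have hA : |a| ^ 2 = a ^ 2 := sq_abs a
  have hB : |b| ^ 2 = b ^ 2 := sq_abs b
  have habs0 : 0 ≤ |a| := abs_nonneg a
  have hbbs0 : 0 ≤ |b| := abs_nonneg b
  have h32 : Real.sqrt 2 ≤ 3 / 2 := by nlinarith
  have h5 : 0 ≤ (1 - |a|) * (1 - |b|) :=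
    mul_nonneg (by linarith) (by linarith)
  rcases le_or_gt (|a| + |b|) 1 with ht | ht
  · nlinarith [mul_nonneg (sub_nonneg.mpr ha) habs0, mul_nonneg (sub_nonneg.mpr hb) hbbs0]
  · have h6 : 0 ≤ (Real.sqrt 2 - (|a| + |b|)) * ((|a| + |b|) + Real.sqrt 2 - 2) :=
      mul_nonneg (by linarith) (by nlinarith [one_lt_sqrt2])
    nlinarith [h5, h6]

/-- The vertex of the octagon. -/
lemma sigma2_oct : sigma2 Poct = Real.sqrt (4 - 2 * Real.sqrt 2) := by
  have s2 := sqrt2_mul_self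
  have s0 := sqrt2_pos
  have h40 : (0:ℝ) ≤ 4 - 2 * Real.sqrt 2 := by nlinarith
  apply IsGreatest.csSup_eq
  constructor
  · refine ⟨vec2 1 (Real.sqrt 2 - 1), ?_, ?_⟩
    · intro p hp
      have hx : vec2 1 (Real.sqrt 2 - 1) ∈ {x : E 2 | ∀ p ∈ Poct, |⟪p, x⟫| ≤ 1} := by
        rw [Dset_eq]
        simp only [Set.mem_setOf_eq]
        refine ⟨?_, ?_, ?_, ?_⟩
        · show |(1:ℝ)| ≤ 1
          norm_num
        · show |Real.sqrt 2 - 1| ≤ 1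
          rw [abs_le]; constructor <;> nlinarith
        · show |1 + (Real.sqrt 2 - 1)| ≤ Real.sqrt 2
          rw [abs_le]; constructor <;> nlinarith
        · show |1 - (Real.sqrt 2 - 1)| ≤ Real.sqrt 2
          rw [abs_le]; constructor <;> nlinarith
      exact hx p hp
    · rw [norm_E2, vec2_apply0, vec2_apply1]
      congr 1
      nlinarith
  · rintro t ⟨x, hx, rfl⟩
    have hx' : x ∈ {x : E 2 | |x 0| ≤ 1 ∧ |x 1| ≤ 1 ∧
        |x 0 + x 1| ≤ Real.sqrt 2 ∧ |x 0 - x 1| ≤ Real.sqrt 2} := by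
      rw [← Dset_eq]; exact hx
    obtain ⟨h1, h2, h3, h4⟩ := hx'
    rw [norm_E2]
    exact Real.sqrt_le_sqrt (oct_sq_bound h1 h2 h3 h4)

lemma cos_pi_div_eight_inv : (Real.cos (Real.pi / 8))⁻¹ = Real.sqrt (4 - 2 * Real.sqrt 2) := by
  have s2 := sqrt2_mul_self
  have s0 := sqrt2_pos
  have h40 : (0:ℝ) ≤ 4 - 2 * Real.sqrt 2 := by nlinarith
  have h20 : (0:ℝ) ≤ 2 + Real.sqrt 2 := by linarith
  have hprod : Real.sqrt (4 - 2 * Real.sqrt 2) * Real.sqrt (2 + Real.sqrt 2) = 2 := by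
    rw [← Real.sqrt_mul h40]
    rw [show (4 - 2 * Real.sqrt 2) * (2 + Real.sqrt 2) = 4 by nlinarith]
    rw [show (4:ℝ) = 2 ^ 2 by norm_num, Real.sqrt_sq (by norm_num : (0:ℝ) ≤ 2)]
  have hs20 : (0:ℝ) < Real.sqrt (2 + Real.sqrt 2) := Real.sqrt_pos.mpr (by linarith)
  rw [Real.cos_pi_div_eight]
  rw [inv_div]
  rw [eq_comm, eq_div_iff (ne_of_gt hs20)]
  linarith [hprod]

/-- linear independence from determinant. -/
lemma li_vec2 {a b a' b' : ℝ} (h : a * b' - b * a' ≠ 0) :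
    LinearIndependent ℝ ![vec2 a b, vec2 a' b'] := by
  rw [LinearIndependent.pair_iff]
  intro s t hst
  have h0 : s * a + t * a' = 0 := by
    have := congrArg (fun (z : E 2) => z 0) hst
    simpa [vec2_apply0] using this
  have h1 : s * b + t * b' = 0 := by
    have := congrArg (fun (z : E 2) => z 1) hst
    simpa [vec2_apply1] using this
  constructor
  · have hs : s * (a * b' - b * a') = 0 := by linear_combination b' * h0 - a' * h1
    rcases mul_eq_zero.mp hs with hs | hs
    · exact hs
    · exact absurd hs h
  · have ht : t * (a * b' - b * a') = 0 := by linear_combination -b * h0 + a * h1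
    rcases mul_eq_zero.mp ht with ht | ht
    · exact ht
    · exact absurd ht h

/-- For two elements of the octagonal system, either the inner product is small
or the vectors are (anti)parallel. -/
lemma oct_inner_cases : ∀ p ∈ Poct, ∀ q ∈ Poct,
    |⟪q, p⟫| ≤ c₈ ∨ q = p ∨ q = -p := by
  have s2 := sqrt2_mul_self
  have s0 := sqrt2_pos
  intro p hp q hq
  rw [Poct_eq] at hp hq
  simp only [Set.mem_insert_iff, Set.mem_singleton_iff] at hp hq
  rcases hp with rfl|rfl|rfl|rfl|rfl|rfl|rfl|rfl <;>
    rcases hq with rfl|rfl|rfl|rfl|rfl|rfl|rfl|rfl <;>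
    first
      | (right; left; rfl)
      | ((right; right; rw [neg_vec2, vec2_eq_iff]; constructor <;> norm_num); done)
      | (left; rw [inner_vec2, vec2_apply0, vec2_apply1, abs_le];
         constructor <;> nlinarith)

/-- value of the inner sup in `sigma1` for each `p ∈ Poct`. -/
lemma sigma1_inner (p : E 2) (hp : p ∈ Poct) :
    sSup {t | ∃ v : Fin 2 → E 2, BasisIn Poct v ∧
      t = sInf (Set.range fun i => |⟪v i, p⟫|)} = c₈ := by
  have s2 := sqrt2_mul_self
  have s0 := sqrt2_pos
  have hc0 : (0:ℝ) ≤ c₈ := by positivity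
  have hc1 : c₈ ≤ 1 := by nlinarith [sqrt2_lt_two]
  -- choose a partner q
  have hpart : ∃ a b a' b', p = vec2 a b ∧ vec2 a' b' ∈ Poct ∧
      ⟪vec2 a b, vec2 a b⟫ = 1 ∧ ⟪vec2 a' b', vec2 a b⟫ = c₈ ∧
      a * b' - b * a' ≠ 0 := by
    have hmem : ∀ r, r ∈ ({vec2 1 0, vec2 c₈ c₈, vec2 0 1, vec2 (-c₈) c₈,
        vec2 (-1) 0, vec2 (-c₈) (-c₈), vec2 0 (-1), vec2 c₈ (-c₈)} : Set (E 2)) →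
        r ∈ Poct := by
      intro r hr; rw [Poct_eq]; exact hr
    rw [Poct_eq] at hp
    simp only [Set.mem_insert_iff, Set.mem_singleton_iff] at hp
    rcases hp with rfl|rfl|rfl|rfl|rfl|rfl|rfl|rfl
    · exact ⟨1, 0, c₈, c₈, rfl, hmem _ (by tauto), by rw [inner_vec2, vec2_apply0, vec2_apply1]; norm_num,
        by rw [inner_vec2, vec2_apply0, vec2_apply1]; norm_num, by intro hcon; nlinarith⟩
    · exact ⟨c₈, c₈, 1, 0, rfl, hmem _ (by tauto), by rw [inner_vec2, vec2_apply0, vec2_apply1]; nlinarith,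
        by rw [inner_vec2, vec2_apply0, vec2_apply1]; norm_num, by intro hcon; nlinarith⟩
    · refine ⟨0, 1, c₈, c₈, rfl, hmem _ (by tauto), by rw [inner_vec2, vec2_apply0, vec2_apply1]; norm_num,
        by rw [inner_vec2, vec2_apply0, vec2_apply1]; norm_num, ?_⟩
      intro hcon; nlinarith
    · refine ⟨-c₈, c₈, 0, 1, rfl, hmem _ (by tauto), by rw [inner_vec2, vec2_apply0, vec2_apply1]; nlinarith,
        by rw [inner_vec2, vec2_apply0, vec2_apply1]; norm_num, ?_⟩
      intro hcon; nlinarith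
    · refine ⟨-1, 0, -c₈, c₈, rfl, hmem _ (by tauto), by rw [inner_vec2, vec2_apply0, vec2_apply1]; norm_num,
        by rw [inner_vec2, vec2_apply0, vec2_apply1]; ring_nf, ?_⟩
      intro hcon; nlinarith
    · refine ⟨-c₈, -c₈, -1, 0, rfl, hmem _ (by tauto), by rw [inner_vec2, vec2_apply0, vec2_apply1]; nlinarith,
        by rw [inner_vec2, vec2_apply0, vec2_apply1]; ring_nf, ?_⟩
      intro hcon; nlinarith
    · refine ⟨0, -1, -c₈, -c₈, rfl, hmem _ (by tauto), by rw [inner_vec2, vec2_apply0, vec2_apply1]; norm_num,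
        by rw [inner_vec2, vec2_apply0, vec2_apply1]; ring_nf, ?_⟩
      intro hcon; nlinarith
    · refine ⟨c₈, -c₈, 0, -1, rfl, hmem _ (by tauto), by rw [inner_vec2, vec2_apply0, vec2_apply1]; nlinarith,
        by rw [inner_vec2, vec2_apply0, vec2_apply1]; ring_nf, ?_⟩
      intro hcon; nlinarith
  obtain ⟨a, b, a', b', hpab, hq, hpp, hqp, hdet⟩ := hpart
  apply IsGreatest.csSup_eq
  constructor
  · -- c₈ is attained by the basis ![p, q]
    refine ⟨![vec2 a b, vec2 a' b'], ⟨?_, ?_, ?_⟩, ?_⟩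
    · intro i; fin_cases i
      · simpa using hpab ▸ hp
      · simpa using hq
    · exact li_vec2 hdet
    · exact (li_vec2 hdet).span_eq_top_of_card_eq_finrank
        (by simp [finrank_euclideanSpace_fin])
    · rw [range_fin_two]
      simp only [Matrix.cons_val_zero, Matrix.cons_val_one, Matrix.head_cons]
      rw [hpab, hpp, hqp, csInf_pair, abs_one, abs_of_nonneg hc0]
      exact (min_eq_right hc1).symm
  · -- c₈ is an upper bound
    rintro t ⟨v, ⟨hvmem, hli, -⟩, rfl⟩
    rw [range_fin_two, csInf_pair]
    rcases oct_inner_cases p hp (v 0) (hvmem 0) with h | h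
    · exact le_trans inf_le_left h
    rcases oct_inner_cases p hp (v 1) (hvmem 1) with h' | h'
    · exact le_trans inf_le_right h'
    -- both v 0 and v 1 are ± p : contradiction with linear independence
    exfalso
    have hv : v = ![v 0, v 1] := by
      funext i; fin_cases i <;> rfl
    rw [hv, LinearIndependent.pair_iff] at hli
    rcases h with h0 | h0 <;> rcases h' with h1 | h1
    · exact one_ne_zero ((hli 1 (-1) (by rw [h0, h1]; module)).1)
    · exact one_ne_zero ((hli 1 1 (by rw [h0, h1]; module)).1)
    · exact one_ne_zero ((hli 1 1 (by rw [h0, h1]; module)).1)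
    · exact one_ne_zero ((hli 1 (-1) (by rw [h0, h1]; module)).1)

lemma sigma1_oct : sigma1 Poct = 1 / Real.sqrt 2 := by
  have s2 := sqrt2_mul_self
  have s0 := sqrt2_pos
  have hc : (1:ℝ) / Real.sqrt 2 = c₈ := by
    rw [div_eq_div_iff s0.ne' (by norm_num : (2:ℝ) ≠ 0)]
    linarith
  rw [sigma1, hc]
  have hS : {s | ∃ p₁ ∈ Poct, s = sSup {t | ∃ v : Fin 2 → E 2, BasisIn Poct v ∧
      t = sInf (Set.range fun i => |⟪v i, p₁⟫|)}} = {c₈} := by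
    ext s
    simp only [Set.mem_setOf_eq, Set.mem_singleton_iff]
    constructor
    · rintro ⟨p₁, hp₁, rfl⟩
      exact sigma1_inner p₁ hp₁
    · rintro rfl
      have hmem : vec2 1 0 ∈ Poct := by rw [Poct_eq]; left; rfl
      exact ⟨vec2 1 0, hmem, (sigma1_inner _ hmem).symm⟩
  rw [hS, csInf_singleton]

/-- values of `σ₁`, `σ₂` for the octagonal root system and
identification of the set `D` as a regular octagon. -/
theorem octagon_constants :
    sigma1 Poct = 1 / Real.sqrt 2 ∧
    sigma2 Poct = (Real.cos (Real.pi / 8))⁻¹ ∧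
    sigma2 Poct = Real.sqrt (4 - 2 * Real.sqrt 2) ∧
    {x : E 2 | ∀ p ∈ Poct, |⟪p, x⟫| ≤ 1} =
      {x : E 2 | |x 0| ≤ 1 ∧ |x 1| ≤ 1 ∧
        |x 0 + x 1| ≤ Real.sqrt 2 ∧ |x 0 - x 1| ≤ Real.sqrt 2} := by
  refine ⟨sigma1_oct, ?_, sigma2_oct, Dset_eq⟩
  rw [sigma2_oct, cos_pi_div_eight_inv]
end
end

section
/- Let N ≥ 2, let {e_i}_{i=1}^N be the standard basis of ℝ^N, and let P := {±e_i : 1 ≤ i ≤ N} ∪ {±(e_i + e_j)/√2, ±(e_i − e_j)/√2 : 1 ≤ i < j ≤ N}. Then there exists C₀ > 0 such that for every C ≥ C₀ the set Ω₀ := ([−C, C]^N − e₁) ∪ ([−C−1, C+1]^N + e₁) (the union of the cube [−C, C]^N translated by −e₁ and the cube [−C−1, C+1]^N translated by +e₁) satisfies the reflection property (RP) with respect to P with parameter ρ = 1: Ψ_{Π_p(s)}(Ω₀) ∩ Π_p^−(s) ⊆ Ω₀ ∩ Π_p^−(s) for all p ∈ P and all s > 1. -/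
open scoped RealInnerProductSpace
open Metric Set MeasureTheory

noncomputable section

variable {N : ℕ}

/-- The root system `{±e_i} ∪ {±(e_i ± e_j)/√2 : i < j}`. -/
def Psq (N : ℕ) : Set (E N) :=
  {p | ∃ i : Fin N, p = EuclideanSpace.single i (1 : ℝ) ∨
        p = -EuclideanSpace.single i (1 : ℝ)} ∪
  {p | ∃ i j : Fin N, i < j ∧
        (p = (Real.sqrt 2)⁻¹ •
            (EuclideanSpace.single i (1 : ℝ) + EuclideanSpace.single j (1 : ℝ)) ∨
         p = -((Real.sqrt 2)⁻¹ •
            (EuclideanSpace.single i (1 : ℝ) + EuclideanSpace.single j (1 : ℝ))) ∨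
         p = (Real.sqrt 2)⁻¹ •
            (EuclideanSpace.single i (1 : ℝ) - EuclideanSpace.single j (1 : ℝ)) ∨
         p = -((Real.sqrt 2)⁻¹ •
            (EuclideanSpace.single i (1 : ℝ) - EuclideanSpace.single j (1 : ℝ))))}

/-- The union of the cube `[−C,C]^N` translated by `−e₁` and the cube
`[−C−1,C+1]^N` translated by `+e₁`. -/
def twoCubes (N : ℕ) (hN : 2 ≤ N) (C : ℝ) : Set (E N) :=
  {x | ∀ i : Fin N, |(x + EuclideanSpace.single (⟨0, by omega⟩ : Fin N) (1 : ℝ)) i| ≤ C} ∪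
  {x | ∀ i : Fin N, |(x - EuclideanSpace.single (⟨0, by omega⟩ : Fin N) (1 : ℝ)) i| ≤ C + 1}

/-!
The reflections `reflect0 p`, `p ∈ Psq N`, act on coordinates as signed permutations, so each
cube `c + [-a, a]^N` is invariant under the reflection across the mirror `Π_p(⟪c, p⟫)` through its
centre. If `⟪c, p⟫ ≤ s ≤ ⟪x, p⟫`, the reflection of `x` across `Π_p(s)` lies on the segment from `x`
to its reflection across `Π_p(⟪c, p⟫)`, hence in the cube by convexity. For the two centres `∓e₁`
and unit vectors `p` we have `⟪c, p⟫ ≤ 1 < s`, and (RP) passes to unions, so any `C₀ > 0` works.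
-/

local notation "𝐞" => EuclideanSpace.single (𝕜 := ℝ)

lemma reflect0_apply (p z : E N) (k : Fin N) : reflect0 p z k = z k - 2 * ⟪z, p⟫ * p k := by
  simp [reflect0, reflect]

lemma reflect0_neg (p : E N) : reflect0 (-p) = reflect0 p := by
  funext x; simp [reflect0, reflect, inner_neg_right, smul_neg]

lemma reflect0_inv_sqrt_two_smul (q z : E N) : reflect0 ((√2)⁻¹ • q) z = z - ⟪z, q⟫ • q := by
  have h : (2 : ℝ) * (√2)⁻¹ * (√2)⁻¹ = 1 := by
    rw [mul_assoc, ← mul_inv, Real.mul_self_sqrt zero_le_two, mul_inv_cancel₀ two_ne_zero]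
  simp only [reflect0, reflect, real_inner_smul_right, smul_smul, sub_zero]
  congr 2
  linear_combination ⟪z, q⟫ * h

lemma inner_reflect (p x : E N) (s : ℝ) :
    ⟪reflect p s x, p⟫ = ⟪x, p⟫ - 2 * (⟪x, p⟫ - s) * ‖p‖ ^ 2 := by
  rw [reflect, inner_sub_left, real_inner_smul_left, real_inner_self_eq_norm_sq]

lemma reflect_inner_sub (p c x : E N) : reflect p ⟪c, p⟫ x - c = reflect0 p (x - c) := by
  simp only [reflect0, reflect, inner_sub_left, sub_zero]
  abel

lemma reflect_mem_of_convex {K : Set (E N)} (hK : Convex ℝ K) {p x : E N} {b s : ℝ}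
    (hx : x ∈ K) (hbx : reflect p b x ∈ K) (hbs : b ≤ s) (hsx : s ≤ ⟪x, p⟫) :
    reflect p s x ∈ K := by
  rcases hsx.eq_or_lt with hsx | hsx
  · simpa [reflect, ← hsx] using hx
  have hb : ⟪x, p⟫ - b ≠ 0 := sub_ne_zero.2 (hbs.trans_lt hsx).ne'
  have hseg : reflect p s x = x + ((⟪x, p⟫ - s) / (⟪x, p⟫ - b)) • (reflect p b x - x) := by
    simp only [reflect, sub_sub_cancel_left, smul_neg, smul_smul]
    rw [sub_eq_add_neg]
    congr 3
    field_simp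
  rw [hseg]
  refine hK.add_smul_sub_mem hx hbx ⟨div_nonneg (by linarith) (by linarith), ?_⟩
  rw [div_le_one (by linarith)]
  linarith

def cube (c : E N) (a : ℝ) : Set (E N) := {x | ∀ i, |(x - c) i| ≤ a}

lemma convex_cube (c : E N) (a : ℝ) : Convex ℝ (cube c a) := by
  intro x hx y hy u v hu hv huv i
  have hi : (u • x + v • y - c) i = u * (x - c) i + v * (y - c) i := by
    simp only [PiLp.sub_apply, PiLp.add_apply, PiLp.smul_apply, smul_eq_mul]
    linear_combination c i * huv
  calc |(u • x + v • y - c) i| ≤ u * a + v * a := by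
        rw [hi]
        refine (abs_add_le _ _).trans (add_le_add ?_ ?_) <;>
          rw [abs_mul, abs_of_nonneg ‹_›] <;> gcongr
        exacts [hx i, hy i]
    _ = a := by rw [← add_mul, huv, one_mul]

lemma norm_inv_sqrt_two_smul {q : E N} (hq : ‖q‖ ^ 2 = 2) : ‖(√2)⁻¹ • q‖ = 1 := by
  rw [norm_smul, ← Real.sqrt_sq (norm_nonneg q), hq, norm_inv,
    Real.norm_of_nonneg (Real.sqrt_nonneg 2), inv_mul_cancel₀ (by positivity)]

lemma norm_single_add_single_sq {i j : Fin N} (hij : i ≠ j) : ‖𝐞 i 1 + 𝐞 j 1‖ ^ 2 = 2 := by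
  rw [norm_add_sq_real, EuclideanSpace.inner_single_left]
  norm_num [hij.symm]

lemma norm_single_sub_single_sq {i j : Fin N} (hij : i ≠ j) : ‖𝐞 i 1 - 𝐞 j 1‖ ^ 2 = 2 := by
  rw [norm_sub_sq_real, EuclideanSpace.inner_single_left]
  norm_num [hij.symm]

lemma norm_eq_one_of_mem_Psq {p : E N} (hp : p ∈ Psq N) : ‖p‖ = 1 := by
  rcases hp with ⟨i, rfl | rfl⟩ | ⟨i, j, hij, rfl | rfl | rfl | rfl⟩
  · simp
  · simp
  · exact norm_inv_sqrt_two_smul (norm_single_add_single_sq hij.ne)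
  · rw [norm_neg]; exact norm_inv_sqrt_two_smul (norm_single_add_single_sq hij.ne)
  · exact norm_inv_sqrt_two_smul (norm_single_sub_single_sq hij.ne)
  · rw [norm_neg]; exact norm_inv_sqrt_two_smul (norm_single_sub_single_sq hij.ne)

lemma exists_abs_reflect0_single_apply_eq (i : Fin N) (z : E N) (k : Fin N) :
    ∃ m, |reflect0 (𝐞 i 1) z k| = |z m| := by
  refine ⟨k, ?_⟩
  rw [reflect0_apply, EuclideanSpace.inner_single_right, PiLp.single_apply]
  split_ifs with hk
  · subst hk
    rw [← abs_neg, conj_trivial]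
    ring_nf
  · simp

lemma exists_abs_reflect0_single_add_single_apply_eq {i j : Fin N} (hij : i ≠ j) (z : E N)
    (k : Fin N) : ∃ m, |reflect0 ((√2)⁻¹ • (𝐞 i 1 + 𝐞 j 1)) z k| = |z m| := by
  simp only [reflect0_inv_sqrt_two_smul, inner_add_right, EuclideanSpace.inner_single_right,
    PiLp.sub_apply, PiLp.smul_apply, PiLp.add_apply, PiLp.single_apply]
  by_cases hi : k = i
  · exact ⟨j, by simp [hi, hij]⟩
  by_cases hj : k = j
  · exact ⟨i, by simp [hj, hij.symm]⟩
  · exact ⟨k, by simp [hi, hj]⟩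

lemma exists_abs_reflect0_single_sub_single_apply_eq {i j : Fin N} (hij : i ≠ j) (z : E N)
    (k : Fin N) : ∃ m, |reflect0 ((√2)⁻¹ • (𝐞 i 1 - 𝐞 j 1)) z k| = |z m| := by
  simp only [reflect0_inv_sqrt_two_smul, inner_sub_right, EuclideanSpace.inner_single_right,
    PiLp.sub_apply, PiLp.smul_apply, PiLp.single_apply]
  by_cases hi : k = i
  · exact ⟨j, by simp [hi, hij]⟩
  by_cases hj : k = j
  · exact ⟨i, by simp [hj, hij.symm]⟩
  · exact ⟨k, by simp [hi, hj]⟩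

lemma exists_abs_reflect0_apply_eq_of_mem_Psq {p : E N} (hp : p ∈ Psq N) (z : E N) (k : Fin N) :
    ∃ m, |reflect0 p z k| = |z m| := by
  rcases hp with ⟨i, rfl | rfl⟩ | ⟨i, j, hij, rfl | rfl | rfl | rfl⟩ <;>
    simp only [reflect0_neg]
  · exact exists_abs_reflect0_single_apply_eq i z k
  · exact exists_abs_reflect0_single_apply_eq i z k
  · exact exists_abs_reflect0_single_add_single_apply_eq hij.ne z k
  · exact exists_abs_reflect0_single_add_single_apply_eq hij.ne z k
  · exact exists_abs_reflect0_single_sub_single_apply_eq hij.ne z k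
  · exact exists_abs_reflect0_single_sub_single_apply_eq hij.ne z k

lemma reflect_mem_cube {p c x : E N} {a s : ℝ} (hp : p ∈ Psq N) (hx : x ∈ cube c a)
    (hcs : ⟪c, p⟫ ≤ s) (hsx : s ≤ ⟪x, p⟫) : reflect p s x ∈ cube c a := by
  refine reflect_mem_of_convex (convex_cube c a) hx (fun k => ?_) hcs hsx
  obtain ⟨m, hm⟩ := exists_abs_reflect0_apply_eq_of_mem_Psq hp (x - c) k
  rw [reflect_inner_sub, hm]
  exact hx m

lemma reflProp_cube {c : E N} {ρ : ℝ} (hc : ∀ p ∈ Psq N, ⟪c, p⟫ ≤ ρ) (a : ℝ) :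
    ReflProp (Psq N) ρ (cube c a) := by
  rintro p hp s hs _ ⟨⟨x, hx, rfl⟩, hlt⟩
  have hsx : s ≤ ⟪x, p⟫ := by
    have := inner_reflect p x s
    rw [norm_eq_one_of_mem_Psq hp] at this
    linarith [hlt.out]
  exact ⟨reflect_mem_cube hp hx ((hc p hp).trans hs.le) hsx, hlt⟩

lemma ReflProp.union {P : Set (E N)} {ρ : ℝ} {Ω₁ Ω₂ : Set (E N)} (h₁ : ReflProp P ρ Ω₁)
    (h₂ : ReflProp P ρ Ω₂) : ReflProp P ρ (Ω₁ ∪ Ω₂) := by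
  intro p hp s hs
  rw [image_union, union_inter_distrib_right, union_inter_distrib_right]
  exact union_subset_union (h₁ p hp s hs) (h₂ p hp s hs)

lemma inner_le_one_of_mem_Psq {v p : E N} (hv : ‖v‖ = 1) (hp : p ∈ Psq N) : ⟪v, p⟫ ≤ 1 := by
  simpa [hv, norm_eq_one_of_mem_Psq hp] using real_inner_le_norm v p

lemma twoCubes_eq (N : ℕ) (hN : 2 ≤ N) (C : ℝ) :
    twoCubes N hN C = cube (-𝐞 ⟨0, by omega⟩ 1) C ∪ cube (𝐞 ⟨0, by omega⟩ 1) (C + 1) := by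
  simp only [twoCubes, cube, sub_neg_eq_add]

/-- for all sufficiently large `C`, the union of the two cubes
satisfies the reflection property with respect to `Psq N` and `ρ = 1`. -/
theorem twoCubes_reflProp (N : ℕ) (hN : 2 ≤ N) :
    ∃ C₀ > 0, ∀ C ≥ C₀, ReflProp (Psq N) 1 (twoCubes N hN C) := by
  have he : ‖(𝐞 ⟨0, by omega⟩ 1 : E N)‖ = 1 := by simp
  refine ⟨1, one_pos, fun C _ => ?_⟩
  rw [twoCubes_eq]
  exact (reflProp_cube (fun p hp => inner_le_one_of_mem_Psq ((norm_neg _).trans he) hp) C).union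
    (reflProp_cube (fun p hp => inner_le_one_of_mem_Psq he hp) (C + 1))
end
end
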